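/- arXiv:1303.2820 — 9 statements merged into one kernel-verified Lean document; each statement's English description precedes it below -/
import Mathlib

section
/- Fix λ ∈ (0,1) and positive constants λ_1, λ_2. Among all A ≥ 0, B ≥ 0 satisfying (A + B + 1)/(A + B + AB + 1) = λ, the function f(A,B) = A/λ_1 + B/λ_2 is minimized at A = (1-λ)/λ + √(λ_1/λ_2)·√(1-λ)/λ and B = (1-λ)/λ + √(λ_2/λ_1)·√(1-λ)/λ. -/
/-!
Put `μ = 1 - λ`, `u = λA - μ`, `v = λB - μ`. The MSE constraint becomes the hyperbola `u v = μ`,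
and `A, B ≥ 0` forces the positive branch `u, v > 0`. Up to the affine change of variables the
cost is `u/λ₁ + v/λ₂`, whose minimum on that branch is given by AM–GM: the product of the two
summands is fixed, so their sum is smallest when they are equal, i.e. at
`u = √(λ₁/λ₂) √μ`, `v = √(λ₂/λ₁) √μ`.
-/

open Real

lemma two_mul_le_add_of_mul_eq_sq {x y s : ℝ} (hx : 0 ≤ x) (hy : 0 ≤ y)
    (h : x * y = s ^ 2) : 2 * s ≤ x + y := by
  nlinarith [sq_nonneg (x - y)]

lemma div_add_div_le_of_mul_eq_of_div_eq {l₁ l₂ u v u₀ v₀ : ℝ} (h₁ : 0 < l₁) (h₂ : 0 < l₂)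
    (hbal : u₀ / l₁ = v₀ / l₂) (hu : 0 ≤ u) (hv : 0 ≤ v)
    (huv : u * v = u₀ * v₀) : u₀ / l₁ + v₀ / l₂ ≤ u / l₁ + v / l₂ := by
  have hprod : u / l₁ * (v / l₂) = (u₀ / l₁) ^ 2 := by
    calc u / l₁ * (v / l₂) = u₀ / l₁ * (v₀ / l₂) := by rw [div_mul_div_comm, huv, div_mul_div_comm]
      _ = (u₀ / l₁) ^ 2 := by rw [← hbal, sq]
  rw [← hbal, ← two_mul]
  exact two_mul_le_add_of_mul_eq_sq (by positivity) (by positivity) hprod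

lemma sqrt_div_mul_sqrt_div_swap {a b : ℝ} (ha : 0 < a) (hb : 0 < b) :
    √(a / b) * √(b / a) = 1 := by
  rw [← sqrt_mul (by positivity), div_mul_div_comm, mul_comm b, div_self (by positivity), sqrt_one]

lemma sqrt_div_div_self_swap {a b : ℝ} (ha : 0 < a) (hb : 0 < b) :
    √(a / b) / a = √(b / a) / b := by
  rw [sqrt_div ha.le, sqrt_div hb.le]
  field_simp
  rw [sq_sqrt ha.le, sq_sqrt hb.le, mul_comm]

lemma mse_constraint_iff {lam A B : ℝ} (hlam : lam ≠ 0) (hden : A + B + A * B + 1 ≠ 0) :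
    (A + B + 1) / (A + B + A * B + 1) = lam ↔
      (lam * A - (1 - lam)) * (lam * B - (1 - lam)) = 1 - lam := by
  rw [div_eq_iff hden]
  constructor
  · intro h
    linear_combination (-lam) * h
  · intro h
    apply mul_left_cancel₀ hlam
    linear_combination (-1) * h

lemma pos_of_mul_eq_of_neg_le {μ u v : ℝ} (hμ₀ : 0 < μ) (hμ₁ : μ < 1) (hu : -μ ≤ u)
    (hv : -μ ≤ v) (huv : u * v = μ) : 0 < u := by
  by_contra! hu'
  have hv' : v < 0 := by nlinarith
  nlinarith [mul_le_mul_of_nonneg_right (neg_le.mp hu) (by linarith : (0 : ℝ) ≤ -v)]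

theorem stmt_1 (lam l1 l2 : ℝ) (hlam : lam ∈ Set.Ioo (0:ℝ) 1)
    (h1 : 0 < l1) (h2 : 0 < l2) :
    let A0 := (1 - lam) / lam + Real.sqrt (l1 / l2) * Real.sqrt (1 - lam) / lam
    let B0 := (1 - lam) / lam + Real.sqrt (l2 / l1) * Real.sqrt (1 - lam) / lam
    0 ≤ A0 ∧ 0 ≤ B0 ∧
      (A0 + B0 + 1) / (A0 + B0 + A0 * B0 + 1) = lam ∧
      ∀ A B : ℝ, 0 ≤ A → 0 ≤ B →
        (A + B + 1) / (A + B + A * B + 1) = lam →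
        A0 / l1 + B0 / l2 ≤ A / l1 + B / l2 := by
  obtain ⟨hl₀, hl₁⟩ := hlam
  intro A0 B0
  set μ := 1 - lam with hμ
  have hμ₀ : 0 < μ := by linarith
  set u₀ := √(l1 / l2) * √μ
  set v₀ := √(l2 / l1) * √μ
  have hA0 : A0 = (μ + u₀) / lam := by simp only [A0, u₀]; ring
  have hB0 : B0 = (μ + v₀) / lam := by simp only [B0, v₀]; ring
  have hprod : u₀ * v₀ = μ := by
    rw [mul_mul_mul_comm, sqrt_div_mul_sqrt_div_swap h1 h2, one_mul, mul_self_sqrt hμ₀.le]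
  have hbal : u₀ / l1 = v₀ / l2 := by
    rw [mul_div_right_comm, mul_div_right_comm _ √μ, sqrt_div_div_self_swap h1 h2]
  refine ⟨by rw [hA0]; positivity, by rw [hB0]; positivity, ?_, fun A B hA hB hAB => ?_⟩
  · rw [mse_constraint_iff hl₀.ne' (by positivity), hA0, hB0]
    field_simp
    linear_combination hprod
  · rw [mse_constraint_iff hl₀.ne' (by positivity), ← hμ] at hAB
    set u := lam * A - μ
    set v := lam * B - μ
    have hAu : -μ ≤ u := by linarith [mul_nonneg hl₀.le hA]
    have hBv : -μ ≤ v := by linarith [mul_nonneg hl₀.le hB]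
    have hu : 0 < u := pos_of_mul_eq_of_neg_le hμ₀ (by linarith) hAu hBv hAB
    have hv : 0 < v := pos_of_mul_eq_of_neg_le hμ₀ (by linarith) hBv hAu (by rwa [mul_comm])
    have hmin := div_add_div_le_of_mul_eq_of_div_eq h1 h2 hbal hu.le hv.le
      (hAB.trans hprod.symm)
    calc A0 / l1 + B0 / l2 = (μ / l1 + μ / l2 + (u₀ / l1 + v₀ / l2)) / lam := by
          rw [hA0, hB0]; ring
      _ ≤ (μ / l1 + μ / l2 + (u / l1 + v / l2)) / lam := by gcongr
      _ = A / l1 + B / l2 := by simp only [u, v]; field_simp; ring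
end

section
/- For c > 0, the function P(λ) = c(2(1-λ)/λ + 2√(1-λ)/λ) (i.e., γ = 2) is convex on the interval (0, 8/9] and concave on (8/9, 1). -/
/-!
With `s = √(1 - λ)` we have `λ = (1 - s) (1 + s)`, so `P(λ) = 2 c s / (1 - s) = 2 c ((1 - s)⁻¹ - 1)`.
Differentiating twice, using `ds/dλ = -1 / (2 s)`, gives
`P''(λ) = c (3 s - 1) / (2 s³ (1 - s)³)`, whose sign is that of `3 s - 1`, i.e. of `8/9 - λ`.
-/

open Real Set

noncomputable section

def power (c x : ℝ) : ℝ := 2 * c * ((1 - √(1 - x))⁻¹ - 1)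

def powerDeriv (c x : ℝ) : ℝ := -c / (√(1 - x) * (1 - √(1 - x)) ^ 2)

def powerDeriv2 (c x : ℝ) : ℝ :=
  c * (3 * √(1 - x) - 1) / (2 * √(1 - x) ^ 3 * (1 - √(1 - x)) ^ 3)

end

section

variable {c x : ℝ}

lemma hasDerivAt_sqrt_one_sub (hx : x < 1) :
    HasDerivAt (fun y => √(1 - y)) (-1 / (2 * √(1 - x))) x :=
  ((hasDerivAt_id x).const_sub 1).sqrt (by simp only [id]; linarith)

lemma sqrt_one_sub_pos (hx : x < 1) : 0 < √(1 - x) := sqrt_pos.2 (by linarith)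

lemma sqrt_one_sub_lt_one (hx : 0 < x) : √(1 - x) < 1 := (sqrt_lt' one_pos).2 (by linarith)

lemma one_third_lt_sqrt_one_sub_iff : 1 / 3 < √(1 - x) ↔ x < 8 / 9 := by
  rw [lt_sqrt (by norm_num)]
  constructor <;> intro h <;> linarith

lemma eqOn_power :
    EqOn (fun x => c * (2 * (1 - x) / x + 2 * √(1 - x) / x)) (power c) (Ioo 0 1) := by
  rintro x ⟨hx0, hx1⟩
  have hsq : √(1 - x) ^ 2 = 1 - x := sq_sqrt (by linarith)
  have hs1 := sqrt_one_sub_lt_one hx0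
  dsimp only [power]
  set s := √(1 - x)
  have hx : x = (1 - s) * (1 + s) := by linarith
  rw [← hsq, hx]
  have : 1 - s ≠ 0 := by linarith
  have : 1 + s ≠ 0 := by positivity
  field_simp
  ring

lemma hasDerivAt_power (hx : x ∈ Ioo 0 1) : HasDerivAt (power c) (powerDeriv c x) x := by
  have hs1 := sqrt_one_sub_lt_one hx.1
  have h := ((((hasDerivAt_sqrt_one_sub hx.2).const_sub 1).inv
    (sub_ne_zero.2 hs1.ne')).sub_const 1).const_mul (2 * c)
  refine h.congr_deriv ?_
  unfold powerDeriv
  field_simp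

lemma hasDerivAt_powerDeriv (hx : x ∈ Ioo 0 1) :
    HasDerivAt (powerDeriv c) (powerDeriv2 c x) x := by
  have hs := sqrt_one_sub_pos hx.2
  have hs1 : 1 - √(1 - x) ≠ 0 := sub_ne_zero.2 (sqrt_one_sub_lt_one hx.1).ne'
  have hsx := hasDerivAt_sqrt_one_sub hx.2
  have h := ((hsx.mul ((hsx.const_sub 1).pow 2)).inv
    (mul_ne_zero hs.ne' (pow_ne_zero _ hs1))).const_mul (-c)
  refine h.congr_deriv ?_
  unfold powerDeriv2
  simp only [Pi.mul_apply, Pi.pow_apply]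
  field_simp
  ring

lemma powerDeriv2_nonneg (hc : 0 ≤ c) (hx : x ∈ Ioo 0 (8 / 9)) : 0 ≤ powerDeriv2 c x := by
  have h3s := one_third_lt_sqrt_one_sub_iff.2 hx.2
  have hs1 := sqrt_one_sub_lt_one hx.1
  have : 0 < 1 - √(1 - x) := by linarith
  have : 0 ≤ 3 * √(1 - x) - 1 := by linarith
  unfold powerDeriv2
  positivity

lemma powerDeriv2_nonpos (hc : 0 ≤ c) (hx : x ∈ Ioo (8 / 9) 1) : powerDeriv2 c x ≤ 0 := by
  have h3s : √(1 - x) ≤ 1 / 3 := not_lt.1 (one_third_lt_sqrt_one_sub_iff.not.2 hx.1.not_gt)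
  have hs := sqrt_one_sub_pos hx.2
  have hs1 := sqrt_one_sub_lt_one (x := x) (by linarith [hx.1])
  have : 0 < 1 - √(1 - x) := by linarith
  unfold powerDeriv2
  exact div_nonpos_of_nonpos_of_nonneg (mul_nonpos_of_nonneg_of_nonpos hc (by linarith))
    (by positivity)

variable {D : Set ℝ}

lemma convexOn_power (hD : Convex ℝ D) (hD1 : D ⊆ Ioo 0 1)
    (h : ∀ x ∈ interior D, 0 ≤ powerDeriv2 c x) : ConvexOn ℝ D (power c) :=
  convexOn_of_hasDerivWithinAt2_nonneg hD
    (fun _ hx => (hasDerivAt_power (hD1 hx)).continuousAt.continuousWithinAt)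
    (fun _ hx => (hasDerivAt_power (hD1 (interior_subset hx))).hasDerivWithinAt)
    (fun _ hx => (hasDerivAt_powerDeriv (hD1 (interior_subset hx))).hasDerivWithinAt) h

lemma concaveOn_power (hD : Convex ℝ D) (hD1 : D ⊆ Ioo 0 1)
    (h : ∀ x ∈ interior D, powerDeriv2 c x ≤ 0) : ConcaveOn ℝ D (power c) :=
  concaveOn_of_hasDerivWithinAt2_nonpos hD
    (fun _ hx => (hasDerivAt_power (hD1 hx)).continuousAt.continuousWithinAt)
    (fun _ hx => (hasDerivAt_power (hD1 (interior_subset hx))).hasDerivWithinAt)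
    (fun _ hx => (hasDerivAt_powerDeriv (hD1 (interior_subset hx))).hasDerivWithinAt) h

end

theorem stmt_6 (c : ℝ) (hc : 0 < c) :
    let P : ℝ → ℝ := fun lam => c * (2 * (1 - lam) / lam + 2 * Real.sqrt (1 - lam) / lam)
    ConvexOn ℝ (Ioc (0:ℝ) (8/9)) P ∧ ConcaveOn ℝ (Ioo (8/9 : ℝ) 1) P := by
  intro P
  have hIoc : Ioc (0 : ℝ) (8 / 9) ⊆ Ioo 0 1 := Ioc_subset_Ioo_right (by norm_num)
  have hIoo : Ioo (8 / 9 : ℝ) 1 ⊆ Ioo 0 1 := Ioo_subset_Ioo_left (by norm_num)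
  constructor
  · refine (convexOn_power (convex_Ioc _ _) hIoc fun x hx => ?_).congr
      (eqOn_power.symm.mono hIoc)
    rw [interior_Ioc] at hx
    exact powerDeriv2_nonneg hc.le hx
  · refine (concaveOn_power (convex_Ioo _ _) hIoo fun x hx => ?_).congr
      (eqOn_power.symm.mono hIoo)
    rw [interior_Ioo] at hx
    exact powerDeriv2_nonpos hc.le hx
end

section
/- Let γ ≥ 2. The equation 3β - 2 = γ√((1-β)³) has a unique solution β in (0,1], given by β = 1 - ε/(ε+1)², where ε = ((γ² - 2 + γ√(γ² - 4))/2)^{1/3}. -/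
open Real Set

set_option maxHeartbeats 800000 in
theorem stmt_9 (γ : ℝ) (hγ : 2 ≤ γ) :
    let ε := ((γ ^ 2 - 2 + γ * Real.sqrt (γ ^ 2 - 4)) / 2) ^ ((1:ℝ)/3)
    let β := 1 - ε / (ε + 1) ^ 2
    β ∈ Set.Ioc (0:ℝ) 1 ∧ 3 * β - 2 = γ * Real.sqrt ((1 - β) ^ 3) ∧
      ∀ β' ∈ Set.Ioc (0:ℝ) 1, 3 * β' - 2 = γ * Real.sqrt ((1 - β') ^ 3) → β' = β := by
  intro ε β
  have hγ0 : (0:ℝ) < γ := by linarith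
  set s := Real.sqrt (γ ^ 2 - 4) with hs
  have hs0 : 0 ≤ s := Real.sqrt_nonneg _
  have hs2 : s ^ 2 = γ ^ 2 - 4 := Real.sq_sqrt (by nlinarith)
  set A := (γ ^ 2 - 2 + γ * s) / 2 with hA
  have hA1 : 1 ≤ A := by nlinarith [mul_nonneg hγ0.le hs0]
  have hA0 : 0 < A := by linarith
  have hε : ε = A ^ ((1:ℝ)/3) := rfl
  have hε1 : 1 ≤ ε := by rw [hε]; exact Real.one_le_rpow hA1 (by norm_num)
  have hε0 : 0 < ε := by linarith
  have hε3 : ε ^ 3 = A := by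
    rw [hε, ← Real.rpow_natCast (A ^ ((1:ℝ)/3)) 3, ← Real.rpow_mul hA0.le]
    norm_num
  set u := Real.sqrt A with hu
  have hu2 : u ^ 2 = A := Real.sq_sqrt hA0.le
  have hu0 : 0 < u := Real.sqrt_pos.mpr hA0
  have hApoly : A ^ 2 + 1 = (γ ^ 2 - 2) * A := by
    rw [hA]; nlinarith [hs2]
  have key : A + 1 = γ * u := by
    have h1 : (A + 1) ^ 2 = (γ * u) ^ 2 := by nlinarith [hu2, hApoly]
    nlinarith [mul_pos hγ0 hu0, hA0, h1]
  have hβdef : β = 1 - ε / (ε + 1) ^ 2 := rfl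
  have hd : (0:ℝ) < (ε + 1) ^ 2 := by positivity
  have hne : ε + 1 ≠ 0 := by positivity
  have h1β : 1 - β = ε / (ε + 1) ^ 2 := by rw [hβdef]; ring
  have hmem : β ∈ Set.Ioc (0:ℝ) 1 := by
    constructor
    · have h : ε / (ε + 1) ^ 2 < 1 := (div_lt_one hd).mpr (by nlinarith)
      rw [hβdef]; linarith
    · have h : 0 ≤ ε / (ε + 1) ^ 2 := by positivity
      rw [hβdef]; linarith
  have hsq : Real.sqrt ((1 - β) ^ 3) = u / (ε + 1) ^ 3 := by
    have h2 : (1 - β) ^ 3 = (u / (ε + 1) ^ 3) ^ 2 := by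
      rw [h1β]
      field_simp
      rw [hu2, ← hε3]
    rw [h2, Real.sqrt_sq (by positivity)]
  have heq : 3 * β - 2 = γ * Real.sqrt ((1 - β) ^ 3) := by
    rw [hsq, hβdef]
    rw [mul_div_assoc', ← key, ← hε3]
    field_simp
    ring
  refine ⟨hmem, heq, ?_⟩
  intro β' hβ' heq'
  by_contra hneq
  rcases lt_or_gt_of_ne hneq with h | h
  · have h1 : Real.sqrt ((1 - β) ^ 3) ≤ Real.sqrt ((1 - β') ^ 3) :=
      Real.sqrt_le_sqrt (pow_le_pow_left₀ (by linarith [hmem.2]) (by linarith) 3)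
    have h2 : γ * Real.sqrt ((1 - β) ^ 3) ≤ γ * Real.sqrt ((1 - β') ^ 3) :=
      mul_le_mul_of_nonneg_left h1 hγ0.le
    linarith
  · have h1 : Real.sqrt ((1 - β') ^ 3) ≤ Real.sqrt ((1 - β) ^ 3) :=
      Real.sqrt_le_sqrt (pow_le_pow_left₀ (by linarith [hβ'.2]) (by linarith) 3)
    have h2 : γ * Real.sqrt ((1 - β') ^ 3) ≤ γ * Real.sqrt ((1 - β) ^ 3) :=
      mul_le_mul_of_nonneg_left h1 hγ0.le
    linarith
end

section
/- Let γ ≥ 2, c > 0, β ∈ (0,1) the solution of 3β - 2 = γ√((1-β)³), and P(λ) = c(γ(1-λ)/λ + 2√(1-λ)/λ). Define L(λ) = P(λ) for 0 < λ ≤ β and L(λ) = P(β) + P'(β)(λ - β) for β < λ ≤ 1. Then L(λ) ≤ P(λ) for all λ ∈ (0,1], and L is convex on (0,1]. -/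
open Real Set

/-!
With `t = √(1 - λ)` one has `P = c (γ t² + 2 t) / (1 - t²)` and `P' = -c (γ t + 1 + t²) / (t (1 - t²)²)`.
Writing `s = √(1 - β)`, the equation defining `β` reads `γ s³ = 1 - 3 s²`. For `t ≥ s` it makes the
numerator `3 t⁴ + 6 t² - 1 + 4 γ t³` of the `t`-derivative of that slope nonnegative, so `P'` is
monotone on `(0, β]`; the derivative of `L` is `P'` frozen at `P'(β)` beyond `β`, hence monotone, and
`L` is convex. The same equation makes the tangent at `β` touch `P` to second order:
`P - L = c t (s - t)² (t + 2 s) / ((1 - t²) s³) ≥ 0` on `[β, 1]`.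
-/

noncomputable def tangentExtension (f : ℝ → ℝ) (β x : ℝ) : ℝ :=
  if x ≤ β then f x else f β + deriv f β * (x - β)

section TangentExtension

variable {f : ℝ → ℝ} {a β : ℝ}

lemma hasDerivAt_tangentExtension (hf : ∀ x ∈ Ioc a β, DifferentiableAt ℝ f x)
    {x : ℝ} (hx : a < x) :
    HasDerivAt (tangentExtension f β) (if x ≤ β then deriv f x else deriv f β) x := by
  have htangent : ∀ y, HasDerivAt (fun z => f β + deriv f β * (z - β)) (deriv f β) y := fun y => by
    simpa using (((hasDerivAt_id y).sub_const β).const_mul (deriv f β)).const_add (f β)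
  rcases lt_trichotomy x β with hxβ | rfl | hxβ
  · rw [if_pos hxβ.le]
    refine (hf x ⟨hx, hxβ.le⟩).hasDerivAt.congr_of_eventuallyEq ?_
    filter_upwards [Iio_mem_nhds hxβ] with y hy
    simp [tangentExtension, (mem_Iio.1 hy).le]
  · rw [if_pos le_rfl]
    have hleft : HasDerivWithinAt (tangentExtension f x) (deriv f x) (Iic x) x :=
      (hf x ⟨hx, le_rfl⟩).hasDerivAt.hasDerivWithinAt.congr
        (fun y hy => if_pos (mem_Iic.1 hy)) (if_pos le_rfl)
    have hright : HasDerivWithinAt (tangentExtension f x) (deriv f x) (Ici x) x := by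
      refine (htangent x).hasDerivWithinAt.congr (fun y hy => ?_) (by simp [tangentExtension])
      rcases (mem_Ici.1 hy).eq_or_lt with rfl | hxy
      · simp [tangentExtension]
      · simp [tangentExtension, not_le.2 hxy]
    simpa using hleft.union hright
  · rw [if_neg (not_le.2 hxβ)]
    refine (htangent x).congr_of_eventuallyEq ?_
    filter_upwards [Ioi_mem_nhds hxβ] with y hy
    simp [tangentExtension, not_le.2 (mem_Ioi.1 hy)]

theorem convexOn_tangentExtension (hf : ∀ x ∈ Ioc a β, DifferentiableAt ℝ f x)
    (hf' : MonotoneOn (deriv f) (Ioc a β)) : ConvexOn ℝ (Ioi a) (tangentExtension f β) := by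
  have hderiv := fun x (hx : x ∈ Ioi a) => hasDerivAt_tangentExtension hf hx
  refine MonotoneOn.convexOn_of_deriv (convex_Ioi a)
    (fun x hx => (hderiv x hx).continuousAt.continuousWithinAt) ?_ ?_ <;> rw [interior_Ioi]
  · exact fun x hx => (hderiv x hx).differentiableAt.differentiableWithinAt
  intro x hx y hy hxy
  rw [(hderiv x hx).deriv, (hderiv y hy).deriv]
  by_cases hyβ : y ≤ β
  · rw [if_pos (hxy.trans hyβ), if_pos hyβ]
    exact hf' ⟨hx, hxy.trans hyβ⟩ ⟨hy, hyβ⟩ hxy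
  by_cases hxβ : x ≤ β
  · rw [if_pos hxβ, if_neg hyβ]
    exact hf' ⟨hx, hxβ⟩ ⟨lt_of_lt_of_le hx hxβ, le_rfl⟩ hxβ
  · rw [if_neg hxβ, if_neg hyβ]

end TangentExtension

noncomputable def subchannelPower (c γ lam : ℝ) : ℝ :=
  c * (γ * (1 - lam) / lam + 2 * √(1 - lam) / lam)

noncomputable def powerSlope (γ t : ℝ) : ℝ :=
  (γ * t + 1 + t ^ 2) / (t * (1 - t ^ 2) ^ 2)

section SubchannelPower

variable {c γ : ℝ}

lemma subchannelPower_one_sub_sq {t : ℝ} (ht : 0 ≤ t) :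
    subchannelPower c γ (1 - t ^ 2) = c * ((γ * t ^ 2 + 2 * t) / (1 - t ^ 2)) := by
  rw [subchannelPower, sub_sub_cancel, sqrt_sq ht]
  ring

lemma hasDerivAt_subchannelPower {lam : ℝ} (hlam : lam ∈ Ioo 0 1) :
    HasDerivAt (subchannelPower c γ) (-c * powerSlope γ √(1 - lam)) lam := by
  obtain ⟨hlam0, hlam1⟩ := hlam
  have h1 : HasDerivAt (fun y : ℝ => 1 - y) (-1) lam := by
    simpa using (hasDerivAt_id lam).const_sub 1
  have hsqrt := (hasDerivAt_sqrt (sub_pos.2 hlam1).ne').comp lam h1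
  have hP := (((h1.const_mul γ).div (hasDerivAt_id lam) hlam0.ne').add
    ((hsqrt.const_mul 2).div (hasDerivAt_id lam) hlam0.ne')).const_mul c
  refine hP.congr_deriv ?_
  obtain ⟨t, ht0, rfl⟩ : ∃ t, 0 < t ∧ lam = 1 - t ^ 2 :=
    ⟨√(1 - lam), sqrt_pos.2 (by linarith), by rw [sq_sqrt (by linarith)]; ring⟩
  have ht1 : 1 - t ^ 2 ≠ 0 := hlam0.ne'
  simp only [Function.comp_apply, sub_sub_cancel, sqrt_sq ht0.le, powerSlope, id]
  field_simp
  ring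

lemma hasDerivAt_powerSlope {t : ℝ} (ht : t ∈ Ioo 0 1) :
    HasDerivAt (powerSlope γ)
      ((3 * t ^ 4 + 6 * t ^ 2 - 1 + 4 * γ * t ^ 3) / (t ^ 2 * (1 - t ^ 2) ^ 3)) t := by
  obtain ⟨ht0, ht1⟩ := ht
  have hden : 1 - t ^ 2 ≠ 0 := by nlinarith
  have h := (((hasDerivAt_id t).const_mul γ |>.add_const 1).add (hasDerivAt_pow 2 t)).div
    ((hasDerivAt_id t).mul (((hasDerivAt_pow 2 t).const_sub 1).pow 2))
    (mul_ne_zero ht0.ne' (pow_ne_zero 2 hden))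
  refine h.congr_deriv ?_
  simp only [Pi.add_apply, Pi.mul_apply, Pi.pow_apply, id]
  field_simp
  ring

lemma monotoneOn_powerSlope (hγ : 0 ≤ γ) {s : ℝ} (hs : 0 < s) (hγs : 1 - 3 * s ^ 2 ≤ γ * s ^ 3) :
    MonotoneOn (powerSlope γ) (Ico s 1) := by
  refine monotoneOn_of_hasDerivWithinAt_nonneg (convex_Ico s 1)
    (f' := fun t => (3 * t ^ 4 + 6 * t ^ 2 - 1 + 4 * γ * t ^ 3) / (t ^ 2 * (1 - t ^ 2) ^ 3))
    (fun t ht => ?_) (fun t ht => ?_) (fun t ht => ?_)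
  · exact (hasDerivAt_powerSlope ⟨hs.trans_le ht.1, ht.2⟩).continuousAt.continuousWithinAt
  · rw [interior_Ico] at ht ⊢
    exact (hasDerivAt_powerSlope ⟨hs.trans ht.1, ht.2⟩).hasDerivWithinAt
  · rw [interior_Ico] at ht
    obtain ⟨hst, ht1⟩ := ht
    have hγt : γ * s ^ 3 ≤ γ * t ^ 3 := by gcongr
    -- the numerator is `3 (1 - t²)² + 4 (γ t³ + 3 t² - 1)`, and `γ t³ + 3 t² - 1` increases in `t`
    have hnum : 0 ≤ 3 * t ^ 4 + 6 * t ^ 2 - 1 + 4 * γ * t ^ 3 := by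
      nlinarith [sq_nonneg (1 - t ^ 2), mul_self_lt_mul_self hs.le hst]
    have : 0 < 1 - t ^ 2 := by nlinarith
    positivity

lemma monotoneOn_deriv_subchannelPower (hc : 0 ≤ c) (hγ : 0 ≤ γ) {β : ℝ} (hβ : β < 1)
    (hβγ : 3 * β - 2 ≤ γ * √(1 - β) ^ 3) :
    MonotoneOn (deriv (subchannelPower c γ)) (Ioc 0 β) := by
  have hslope : MonotoneOn (powerSlope γ) (Ico √(1 - β) 1) :=
    monotoneOn_powerSlope hγ (sqrt_pos.2 (by linarith)) (by rw [sq_sqrt (by linarith)]; linarith)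
  have hmem : ∀ x ∈ Ioc 0 β, √(1 - x) ∈ Ico √(1 - β) 1 := fun x hx =>
    ⟨sqrt_le_sqrt (by linarith [hx.2]), (sqrt_lt' one_pos).2 (by linarith [hx.1])⟩
  intro x hx y hy hxy
  rw [(hasDerivAt_subchannelPower ⟨hx.1, hx.2.trans_lt hβ⟩).deriv,
    (hasDerivAt_subchannelPower ⟨hy.1, hy.2.trans_lt hβ⟩).deriv, neg_mul, neg_mul, neg_le_neg_iff]
  exact mul_le_mul_of_nonneg_left
    (hslope (hmem y hy) (hmem x hx) (sqrt_le_sqrt (by linarith))) hc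

lemma subchannelPower_tangent_le (hc : 0 ≤ c) {s t : ℝ} (hs : 0 < s) (hs1 : s < 1)
    (hγs : γ * s ^ 3 = 1 - 3 * s ^ 2) (ht : 0 ≤ t) (hts : t ≤ s) :
    subchannelPower c γ (1 - s ^ 2) + -c * powerSlope γ s * ((1 - t ^ 2) - (1 - s ^ 2)) ≤
      subchannelPower c γ (1 - t ^ 2) := by
  have ht1 : 0 < 1 - t ^ 2 := by nlinarith
  have hs1' : 0 < 1 - s ^ 2 := by nlinarith
  rw [subchannelPower_one_sub_sq hs.le, subchannelPower_one_sub_sq ht, powerSlope,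
    show γ = (1 - 3 * s ^ 2) / s ^ 3 by field_simp; linarith, ← sub_nonneg]
  have hgap : 0 ≤ c * t * (s - t) ^ 2 * (t + 2 * s) / ((1 - t ^ 2) * s ^ 3) := by
    have : 0 ≤ t + 2 * s := by linarith
    positivity
  convert hgap using 1
  field_simp
  ring

end SubchannelPower

theorem stmt_10 (c γ β : ℝ) (hc : 0 < c) (hγ : 2 ≤ γ) (hβ : β ∈ Set.Ioo (0:ℝ) 1)
    (hβeq : 3 * β - 2 = γ * Real.sqrt ((1 - β) ^ 3)) :
    let P : ℝ → ℝ := fun lam => c * (γ * (1 - lam) / lam + 2 * Real.sqrt (1 - lam) / lam)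
    let L : ℝ → ℝ := fun lam =>
      if lam ≤ β then P lam else P β + deriv P β * (lam - β)
    (∀ lam ∈ Set.Ioc (0:ℝ) 1, L lam ≤ P lam) ∧ ConvexOn ℝ (Set.Ioc (0:ℝ) 1) L := by
  intro P L
  obtain ⟨hβ0, hβ1⟩ := hβ
  have hβγ : 3 * β - 2 = γ * √(1 - β) ^ 3 := by
    rwa [← sq_sqrt (by linarith : 0 ≤ 1 - β), ← pow_mul, mul_comm 2 3, pow_mul,
      sqrt_sq (by positivity)] at hβeq
  have hP : deriv P β = -c * powerSlope γ √(1 - β) :=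
    (hasDerivAt_subchannelPower ⟨hβ0, hβ1⟩).deriv
  refine ⟨fun lam hlam => ?_, ?_⟩
  · by_cases hlamβ : lam ≤ β
    · simp only [L, if_pos hlamβ, le_refl]
    have key := subchannelPower_tangent_le (γ := γ) (s := √(1 - β)) (t := √(1 - lam)) hc.le
      (sqrt_pos.2 (by linarith)) ((sqrt_lt' one_pos).2 (by linarith)) (by rw [sq_sqrt (by linarith)]; linarith)
      (sqrt_nonneg (1 - lam)) (sqrt_le_sqrt (by linarith))
    rw [sq_sqrt (by linarith), sq_sqrt (by linarith [hlam.2]), sub_sub_cancel, sub_sub_cancel,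
      ← hP] at key
    simp only [L, if_neg hlamβ]
    exact key
  · exact (convexOn_tangentExtension
      (fun x hx => (hasDerivAt_subchannelPower ⟨hx.1, hx.2.trans_lt hβ1⟩).differentiableAt)
      (monotoneOn_deriv_subchannelPower hc.le (by linarith) hβ1 hβγ.le)).subset
      Ioc_subset_Ioi_self (convex_Ioc 0 1)
end

section
/- Let η_1 ≤ η_2 ≤ ... ≤ η_K with η_n ∈ (0,1], and w_1 ≤ w_2 ≤ ... ≤ w_K be positive weights. Consider minimizing ∑_{n=1}^K w_n/λ_n over λ with ∑_{n=1}^j λ_n ≤ ∑_{n=1}^j η_n for all j, 0 < λ_n ≤ 1, and λ_n ≤ λ_{n+1}. Then any optimal solution λ* automatically satisfies the ordering λ*_n ≤ λ*_{n+1}, i.e., the ordering constraint is inactive: if a feasible point violates it, swapping two adjacent coordinates yields a feasible point with no larger objective. -/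
open Real Finset

theorem stmt_11 (K : ℕ) (η w lam : ℕ → ℝ)
    (hη : ∀ n < K, η n ∈ Set.Ioc (0:ℝ) 1)
    (hηmono : ∀ n, n + 1 < K → η n ≤ η (n + 1))
    (hw : ∀ n < K, 0 < w n)
    (hwmono : ∀ n, n + 1 < K → w n ≤ w (n + 1))
    -- lam is feasible for the sum and bound constraints
    (hfeas : ∀ j ≤ K, ∑ i ∈ Finset.range j, lam i ≤ ∑ i ∈ Finset.range j, η i)
    (hbd : ∀ n < K, lam n ∈ Set.Ioc (0:ℝ) 1)
    -- lam violates the ordering at position n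
    (n : ℕ) (hn : n + 1 < K) (hviol : lam (n + 1) < lam n) :
    let lam' : ℕ → ℝ := fun i =>
      if i = n then lam (n + 1) else if i = n + 1 then lam n else lam i
    (∀ j ≤ K, ∑ i ∈ Finset.range j, lam' i ≤ ∑ i ∈ Finset.range j, η i) ∧
      (∀ m < K, lam' m ∈ Set.Ioc (0:ℝ) 1) ∧
      ∑ i ∈ Finset.range K, w i / lam' i ≤ ∑ i ∈ Finset.range K, w i / lam i := by
  intro lam'
  have hln : 0 < lam n := (hbd n (by omega)).1
  have hln1 : 0 < lam (n + 1) := (hbd (n + 1) hn).1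
  have hsplit : ∀ (j : ℕ) (f : ℕ → ℝ), n + 2 ≤ j →
      ∑ i ∈ Finset.range j, f i =
        ((∑ i ∈ Finset.range n, f i) + f n + f (n + 1)) +
          ∑ i ∈ Finset.Ico (n + 2) j, f i := by
    intro j f hj
    rw [Finset.range_eq_Ico, ← Finset.sum_Ico_consecutive _ (Nat.zero_le (n+2)) hj,
      ← Finset.range_eq_Ico, Finset.sum_range_succ, Finset.sum_range_succ]
  have hsame : ∀ i, i ≠ n → i ≠ n + 1 → lam' i = lam i := by
    intro i h1 h2; simp [lam', h1, h2]
  have hl'n : lam' n = lam (n + 1) := by simp [lam']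
  have hl'n1 : lam' (n + 1) = lam n := by simp [lam']
  have key : ∀ j, ∑ i ∈ Finset.range j, lam' i ≤ ∑ i ∈ Finset.range j, lam i := by
    intro j
    rcases lt_trichotomy j (n + 1) with h | h | h
    · apply le_of_eq
      refine Finset.sum_congr rfl fun i hi => ?_
      simp only [Finset.mem_range] at hi
      exact hsame i (by omega) (by omega)
    · subst h
      rw [Finset.sum_range_succ, Finset.sum_range_succ]
      have heq : ∑ i ∈ Finset.range n, lam' i = ∑ i ∈ Finset.range n, lam i := by
        refine Finset.sum_congr rfl fun i hi => ?_
        simp only [Finset.mem_range] at hi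
        exact hsame i (by omega) (by omega)
      rw [heq, hl'n]
      linarith
    · apply le_of_eq
      rw [hsplit j lam' (by omega), hsplit j lam (by omega)]
      have heq : ∑ i ∈ Finset.range n, lam' i = ∑ i ∈ Finset.range n, lam i := by
        refine Finset.sum_congr rfl fun i hi => ?_
        simp only [Finset.mem_range] at hi
        exact hsame i (by omega) (by omega)
      have heq2 : ∑ i ∈ Finset.Ico (n+2) j, lam' i = ∑ i ∈ Finset.Ico (n+2) j, lam i := by
        refine Finset.sum_congr rfl fun i hi => ?_
        simp only [Finset.mem_Ico] at hi
        exact hsame i (by omega) (by omega)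
      rw [heq, heq2, hl'n, hl'n1]
      ring
  refine ⟨fun j hj => le_trans (key j) (hfeas j hj), fun m hm => ?_, ?_⟩
  · by_cases h1 : m = n
    · subst h1; rw [show lam' m = lam (m+1) from hl'n]; exact hbd (m+1) hn
    by_cases h2 : m = n + 1
    · subst h2; rw [hl'n1]; exact hbd n (by omega)
    · rw [hsame m h1 h2]; exact hbd m hm
  · rw [hsplit K (fun i => w i / lam' i) (by omega), hsplit K (fun i => w i / lam i) (by omega)]
    have heq : ∑ i ∈ Finset.range n, w i / lam' i = ∑ i ∈ Finset.range n, w i / lam i := by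
      refine Finset.sum_congr rfl fun i hi => ?_
      simp only [Finset.mem_range] at hi
      rw [hsame i (by omega) (by omega)]
    have heq2 : ∑ i ∈ Finset.Ico (n+2) K, w i / lam' i = ∑ i ∈ Finset.Ico (n+2) K, w i / lam i := by
      refine Finset.sum_congr rfl fun i hi => ?_
      simp only [Finset.mem_Ico] at hi
      rw [hsame i (by omega) (by omega)]
    simp only [hl'n, hl'n1, heq, heq2]
    rw [heq] at *
    have hinv : 1 / lam n ≤ 1 / lam (n + 1) :=
      one_div_le_one_div_of_le hln1 (le_of_lt hviol)
    have hwn : w n ≤ w (n + 1) := hwmono n hn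
    have hkey : w n / lam (n + 1) + w (n + 1) / lam n ≤
        w n / lam n + w (n + 1) / lam (n + 1) := by
      have h0 : 0 ≤ (w (n + 1) - w n) * (1 / lam (n + 1) - 1 / lam n) :=
        mul_nonneg (by linarith) (by linarith)
      have e1 : w n / lam (n + 1) = w n * (1 / lam (n + 1)) := by ring
      have e2 : w (n + 1) / lam n = w (n + 1) * (1 / lam n) := by ring
      have e3 : w n / lam n = w n * (1 / lam n) := by ring
      have e4 : w (n + 1) / lam (n + 1) = w (n + 1) * (1 / lam (n + 1)) := by ring
      rw [e1, e2, e3, e4]; nlinarith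
    linarith
end

section
/- Let w_1,...,w_K > 0 and δ_0 = 0, δ_j > 0 for j = 1,...,K, with δ_j nondecreasing. The largest coordinate λ̂_K of the minimizer of ∑_{n=1}^K w_n/λ_n over {λ_n > 0 : ∑_{n=1}^j λ_n ≤ δ_j for all j = 1,...,K} equals √(w_K) · max_{j=0,...,K-1} (δ_K - δ_j)/(∑_{n=j+1}^K √(w_n)). -/
open Real Finset

private lemma key1 (m : ℕ) (f : ℕ → ℝ) (a : ℝ) (s : Finset ℕ) :
    ∑ i ∈ s, Function.update f m a i = ∑ i ∈ s, f i + (if m ∈ s then a - f m else 0) := by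
  have h : ∀ i, Function.update f m a i = f i + (if i = m then a - f m else 0) := by
    intro i; rcases eq_or_ne i m with rfl | him
    · simp
    · simp [Function.update_of_ne him, him]
  rw [Finset.sum_congr rfl fun i _ => h i, Finset.sum_add_distrib]
  simp [Finset.sum_ite_eq' s m]

private lemma key2 (m n : ℕ) (hmn : m ≠ n) (f : ℕ → ℝ) (a b : ℝ) (s : Finset ℕ) :
    ∑ i ∈ s, Function.update (Function.update f m a) n b i
      = ∑ i ∈ s, f i + ((if m ∈ s then a - f m else 0) + (if n ∈ s then b - f n else 0)) := by
  have h : ∀ i, Function.update (Function.update f m a) n b i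
      = f i + ((if i = m then a - f m else 0) + (if i = n then b - f n else 0)) := by
    intro i
    rcases eq_or_ne i n with rfl | hin
    · simp [Function.update_self, (hmn.symm : i ≠ m)]
    · rcases eq_or_ne i m with rfl | him
      · simp [Function.update_of_ne hin, Function.update_self, hin]
      · simp [Function.update_of_ne hin, Function.update_of_ne him, him, hin]
  rw [Finset.sum_congr rfl fun i _ => h i, Finset.sum_add_distrib, Finset.sum_add_distrib]
  simp [Finset.sum_ite_eq' s m, Finset.sum_ite_eq' s n]

private lemma keysplit (j K : ℕ) (hj : j ≤ K) (f : ℕ → ℝ) :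
    ∑ i ∈ Icc 1 j, f i + ∑ i ∈ Icc (j+1) K, f i = ∑ i ∈ Icc 1 K, f i := by
  rw [show Finset.Icc 1 j = Finset.Ioc 0 j from Finset.Icc_add_one_left_eq_Ioc 0 j,
      show Finset.Icc 1 K = Finset.Ioc 0 K from Finset.Icc_add_one_left_eq_Ioc 0 K,
      show Finset.Icc (j+1) K = Finset.Ioc j K from Finset.Icc_add_one_left_eq_Ioc j K]
  exact Finset.sum_Ioc_consecutive _ (Nat.zero_le j) hj

theorem stmt_13 (K : ℕ) (hK : 0 < K) (w δ : ℕ → ℝ)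
    (hw : ∀ n, 1 ≤ n → n ≤ K → 0 < w n)
    (hwmono : ∀ n, 1 ≤ n → n + 1 ≤ K → w n ≤ w (n + 1))
    (hδ0 : δ 0 = 0) (hδpos : ∀ j, 1 ≤ j → j ≤ K → 0 < δ j)
    (hδmono : ∀ j, j + 1 ≤ K → δ j ≤ δ (j + 1))
    (lamhat : ℕ → ℝ)
    (hfeas : (∀ n, 1 ≤ n → n ≤ K → 0 < lamhat n) ∧
      ∀ j, 1 ≤ j → j ≤ K → ∑ i ∈ Finset.Icc 1 j, lamhat i ≤ δ j)
    (hmin : ∀ μ : ℕ → ℝ, (∀ n, 1 ≤ n → n ≤ K → 0 < μ n) →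
      (∀ j, 1 ≤ j → j ≤ K → ∑ i ∈ Finset.Icc 1 j, μ i ≤ δ j) →
      ∑ n ∈ Finset.Icc 1 K, w n / lamhat n ≤ ∑ n ∈ Finset.Icc 1 K, w n / μ n) :
    lamhat K = Real.sqrt (w K) *
      (Finset.range K).sup' (Finset.nonempty_range_iff.mpr hK.ne')
        (fun j => (δ K - δ j) / ∑ n ∈ Finset.Icc (j + 1) K, Real.sqrt (w n)) := by
  
  obtain ⟨hpos, hle⟩ := hfeas
  have hwK : 0 < w K := hw K hK le_rfl
  have hlamK : 0 < lamhat K := hpos K hK le_rfl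
  -- positivity of the sums of square roots
  have hSpos : ∀ j, j < K → 0 < ∑ n ∈ Finset.Icc (j + 1) K, Real.sqrt (w n) := by
    intro j hj
    apply Finset.sum_pos
    · intro n hn
      rw [Finset.mem_Icc] at hn
      exact Real.sqrt_pos.mpr (hw n (by omega) hn.2)
    · exact ⟨K, Finset.mem_Icc.mpr ⟨by omega, le_rfl⟩⟩
  -- Step A : the last constraint is tight
  have hA : ∑ i ∈ Finset.Icc 1 K, lamhat i = δ K := by
    by_contra h
    have hlt : ∑ i ∈ Finset.Icc 1 K, lamhat i < δ K := lt_of_le_of_ne (hle K hK le_rfl) h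
    set ε := δ K - ∑ i ∈ Finset.Icc 1 K, lamhat i with hεdef
    have hε0 : 0 < ε := by simp only [hεdef]; linarith
    set μ := Function.update lamhat K (lamhat K + ε) with hμdef
    have hμpos : ∀ n, 1 ≤ n → n ≤ K → 0 < μ n := by
      intro i h1 h2
      rcases eq_or_ne i K with rfl | hiK
      · simp only [hμdef, Function.update_self]; linarith
      · simpa [hμdef, Function.update_of_ne hiK] using hpos i h1 h2
    have hμfeas : ∀ j, 1 ≤ j → j ≤ K → ∑ i ∈ Finset.Icc 1 j, μ i ≤ δ j := by
      intro j h1 h2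
      rw [hμdef, key1]
      rcases eq_or_ne j K with rfl | hjK
      · rw [if_pos (Finset.mem_Icc.mpr ⟨hK, le_rfl⟩)]; simp only [hεdef]; linarith [hle j h1 h2]
      · rw [if_neg (by simp [Finset.mem_Icc]; omega)]
        simpa using hle j h1 h2
    have hobj : ∑ i ∈ Finset.Icc 1 K, w i / μ i
        = ∑ i ∈ Finset.Icc 1 K, w i / lamhat i
          + (w K / (lamhat K + ε) - w K / lamhat K) := by
      have hrw : ∀ i, w i / μ i
          = Function.update (fun i => w i / lamhat i) K (w K / (lamhat K + ε)) i := by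
        intro i
        rcases eq_or_ne i K with rfl | hiK
        · simp [hμdef]
        · simp [hμdef, Function.update_of_ne hiK]
      rw [Finset.sum_congr rfl fun i _ => hrw i, key1,
        if_pos (Finset.mem_Icc.mpr ⟨hK, le_rfl⟩)]
    have hless : w K / (lamhat K + ε) < w K / lamhat K :=
      div_lt_div_of_pos_left hwK hlamK (by linarith)
    have := hmin μ hμpos hμfeas
    rw [hobj] at this
    linarith
  -- Step P : the general perturbation lemma
  have hP : ∀ m n : ℕ, 1 ≤ m → m ≤ K → 1 ≤ n → n ≤ K → m ≠ n →
      ∀ ε₀ : ℝ, 0 < ε₀ →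
      (∀ ε : ℝ, 0 < ε → ε ≤ ε₀ → ∀ j, 1 ≤ j → j ≤ K →
        ∑ i ∈ Finset.Icc 1 j, lamhat i
          + ((if m ≤ j then -ε else 0) + (if n ≤ j then ε else 0)) ≤ δ j) →
      w n * lamhat m ^ 2 ≤ w m * lamhat n ^ 2 := by
    intro m n h1m h2m h1n h2n hmn ε₀ hε₀ hfeasP
    by_contra hlt
    push_neg at hlt
    have hlamm := hpos m h1m h2m
    have hlamn := hpos n h1n h2n
    have hwm := hw m h1m h2m
    have hwn := hw n h1n h2n
    set ψ : ℝ → ℝ := fun ε =>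
      w m / ((lamhat m - ε) * lamhat m) - w n / (lamhat n * (lamhat n + ε)) with hψdef
    have hψ0 : ψ 0 < 0 := by
      have h : w m / (lamhat m * lamhat m) < w n / (lamhat n * lamhat n) := by
        rw [div_lt_div_iff₀ (by positivity) (by positivity)]
        nlinarith
      simp only [hψdef, sub_zero, add_zero]
      linarith
    have hcont : ContinuousAt ψ 0 := by
      apply ContinuousAt.sub
      · exact continuousAt_const.div (by fun_prop) (by simp; positivity)
      · exact continuousAt_const.div (by fun_prop) (by simp; positivity)
    have hev : ∀ᶠ ε in nhds (0:ℝ), ψ ε < 0 :=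
      Filter.Tendsto.eventually_lt_const hψ0 hcont
    have hev2 : ∀ᶠ ε in nhds (0:ℝ), ε < min ε₀ (lamhat m) :=
      eventually_lt_nhds (lt_min hε₀ hlamm)
    have hevent : ∀ᶠ ε in nhdsWithin (0:ℝ) (Set.Ioi 0), ψ ε < 0 ∧ ε < min ε₀ (lamhat m) :=
      (hev.and hev2).filter_mono nhdsWithin_le_nhds
    obtain ⟨ε, ⟨hψε, hεlt⟩, hε0'⟩ := (hevent.and self_mem_nhdsWithin).exists
    have hε0 : 0 < ε := hε0'
    have hεε₀ : ε ≤ ε₀ := le_of_lt (lt_of_lt_of_le hεlt (min_le_left _ _))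
    have hepslamm : ε < lamhat m := lt_of_lt_of_le hεlt (min_le_right _ _)
    set μ := Function.update (Function.update lamhat m (lamhat m - ε)) n (lamhat n + ε)
      with hμdef
    have hμpos : ∀ i, 1 ≤ i → i ≤ K → 0 < μ i := by
      intro i hi1 hi2
      rcases eq_or_ne i n with rfl | hin
      · simp only [hμdef, Function.update_self]; linarith
      · rcases eq_or_ne i m with rfl | him
        · simp only [hμdef, Function.update_of_ne hin, Function.update_self]; linarith
        · simpa [hμdef, Function.update_of_ne hin, Function.update_of_ne him]
            using hpos i hi1 hi2
    have hμfeas : ∀ j, 1 ≤ j → j ≤ K → ∑ i ∈ Finset.Icc 1 j, μ i ≤ δ j := by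
      intro j hj1 hj2
      rw [hμdef, key2 m n hmn]
      have e1 : (if m ∈ Finset.Icc 1 j then lamhat m - ε - lamhat m else 0)
          = (if m ≤ j then -ε else 0) := by
        by_cases h : m ≤ j
        · rw [if_pos (Finset.mem_Icc.mpr ⟨h1m, h⟩), if_pos h]; ring
        · rw [if_neg (by simp [Finset.mem_Icc, h]), if_neg h]
      have e2 : (if n ∈ Finset.Icc 1 j then lamhat n + ε - lamhat n else 0)
          = (if n ≤ j then ε else 0) := by
        by_cases h : n ≤ j
        · rw [if_pos (Finset.mem_Icc.mpr ⟨h1n, h⟩), if_pos h]; ring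
        · rw [if_neg (by simp [Finset.mem_Icc, h]), if_neg h]
      rw [e1, e2]
      exact hfeasP ε hε0 hεε₀ j hj1 hj2
    have hobj : ∑ i ∈ Finset.Icc 1 K, w i / μ i
        = ∑ i ∈ Finset.Icc 1 K, w i / lamhat i + ε * ψ ε := by
      have hrw : ∀ i, w i / μ i
          = Function.update (Function.update (fun i => w i / lamhat i) m
              (w m / (lamhat m - ε))) n (w n / (lamhat n + ε)) i := by
        intro i
        rcases eq_or_ne i n with rfl | hin
        · simp [hμdef]
        · rcases eq_or_ne i m with rfl | him
          · simp [hμdef, Function.update_of_ne hin]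
          · simp [hμdef, Function.update_of_ne hin, Function.update_of_ne him]
      rw [Finset.sum_congr rfl fun i _ => hrw i, key2 m n hmn,
        if_pos (Finset.mem_Icc.mpr ⟨h1m, h2m⟩), if_pos (Finset.mem_Icc.mpr ⟨h1n, h2n⟩)]
      have hne1 : lamhat m ≠ 0 := ne_of_gt hlamm
      have hne2 : lamhat m - ε ≠ 0 := ne_of_gt (by linarith)
      have hne3 : lamhat n ≠ 0 := ne_of_gt hlamn
      have hne4 : lamhat n + ε ≠ 0 := ne_of_gt (by linarith)
      simp only [hψdef]
      congr 1
      field_simp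
      ring
    have hneg : ε * ψ ε < 0 := mul_neg_of_pos_of_neg hε0 hψε
    have := hmin μ hμpos hμfeas
    rw [hobj] at this
    clear_value ψ μ
    linarith
  -- Step B : monotone ratios
  have hB : ∀ m n : ℕ, 1 ≤ m → m < n → n ≤ K → w n * lamhat m ^ 2 ≤ w m * lamhat n ^ 2 := by
    intro m n h1 h2 h3
    apply hP m n h1 (le_trans h2.le h3) (le_trans h1 h2.le) h3 (Nat.ne_of_lt h2) 1 one_pos
    intro ε hε0 hε1 j hj1 hj2
    have hj := hle j hj1 hj2
    by_cases hmj : m ≤ j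
    · by_cases hnj : n ≤ j
      · rw [if_pos hmj, if_pos hnj]; linarith
      · rw [if_pos hmj, if_neg hnj]; linarith
    · have hnj : ¬ n ≤ j := fun h => hmj (le_trans h2.le h)
      rw [if_neg hmj, if_neg hnj]; linarith
  -- sqrt version: √(w K) * λ m ≤ √(w m) * λ K for all m
  have hc : ∀ m, 1 ≤ m → m ≤ K →
      Real.sqrt (w K) * lamhat m ≤ Real.sqrt (w m) * lamhat K := by
    intro m h1 h2
    rcases eq_or_lt_of_le h2 with rfl | hmK
    · exact le_rfl
    · have h := hB m K h1 hmK le_rfl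
      have h' := Real.sqrt_le_sqrt h
      rwa [Real.sqrt_mul hwK.le, Real.sqrt_mul (hw m h1 h2).le,
        Real.sqrt_sq (hpos m h1 h2).le, Real.sqrt_sq hlamK.le] at h'
  -- lower bound pieces: for each j < K,  √(w K) * (δ K - δ j) ≤ S j * λ K
  have hlow : ∀ j, j < K →
      Real.sqrt (w K) * (δ K - δ j)
        ≤ (∑ n ∈ Finset.Icc (j + 1) K, Real.sqrt (w n)) * lamhat K := by
    intro j hj
    have hsplit := keysplit j K hj.le lamhat
    have hδj : δ j ≥ ∑ i ∈ Finset.Icc 1 j, lamhat i := by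
      rcases Nat.eq_zero_or_pos j with rfl | hj0
      · simp [hδ0]
      · exact hle j hj0 hj.le
    have h1 : Real.sqrt (w K) * (δ K - δ j)
        ≤ Real.sqrt (w K) * ∑ n ∈ Finset.Icc (j + 1) K, lamhat n := by
      apply mul_le_mul_of_nonneg_left _ (Real.sqrt_nonneg _)
      linarith
    have h2 : Real.sqrt (w K) * ∑ n ∈ Finset.Icc (j + 1) K, lamhat n
        ≤ (∑ n ∈ Finset.Icc (j + 1) K, Real.sqrt (w n)) * lamhat K := by
      rw [Finset.mul_sum, Finset.sum_mul]
      apply Finset.sum_le_sum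
      intro n hn
      rw [Finset.mem_Icc] at hn
      exact hc n (by omega) hn.2
    linarith
  -- choose the largest tight constraint index j₀ < K
  have hT : ((Finset.range K).filter
      (fun j => ∑ i ∈ Finset.Icc 1 j, lamhat i = δ j)).Nonempty := by
    refine ⟨0, Finset.mem_filter.mpr ⟨Finset.mem_range.mpr hK, ?_⟩⟩
    simp [hδ0]
  obtain ⟨j₀, hj₀mem, hj₀max⟩ : ∃ j₀ ∈ (Finset.range K).filter
      (fun j => ∑ i ∈ Finset.Icc 1 j, lamhat i = δ j),
      ∀ j ∈ (Finset.range K).filter (fun j => ∑ i ∈ Finset.Icc 1 j, lamhat i = δ j), j ≤ j₀ :=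
    ⟨_, Finset.max'_mem _ hT, fun j hj => Finset.le_max' _ j hj⟩
  rw [Finset.mem_filter, Finset.mem_range] at hj₀mem
  obtain ⟨hj₀K, hj₀tight⟩ := hj₀mem
  have hslack : ∀ j, j₀ < j → j < K → ∑ i ∈ Finset.Icc 1 j, lamhat i < δ j := by
    intro j hj1 hj2
    refine lt_of_le_of_ne (hle j (by omega) hj2.le) (fun h => ?_)
    have := hj₀max j (Finset.mem_filter.mpr ⟨Finset.mem_range.mpr hj2, h⟩)
    omega
  -- equality of ratios above j₀
  have heq : ∀ n, j₀ < n → n ≤ K →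
      Real.sqrt (w K) * lamhat n = Real.sqrt (w n) * lamhat K := by
    intro n hn1 hn2
    rcases eq_or_lt_of_le hn2 with rfl | hnK
    · rfl
    · -- strict slack on Icc n (K-1); use hP with m := K
      have hne : (Finset.Icc n (K - 1)).Nonempty := ⟨n, Finset.mem_Icc.mpr ⟨le_rfl, by omega⟩⟩
      set ε₀ := (Finset.Icc n (K - 1)).inf' hne
        (fun j => δ j - ∑ i ∈ Finset.Icc 1 j, lamhat i) with hε₀def
      have hε₀pos : 0 < ε₀ := by
        rw [hε₀def, Finset.lt_inf'_iff]
        intro j hj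
        rw [Finset.mem_Icc] at hj
        have := hslack j (by omega) (by omega)
        linarith
      have hrev := hP K n hK le_rfl (by omega) hn2 (by omega) ε₀ hε₀pos ?_
      · have hfwd := hB n K (by omega) hnK le_rfl
        have h' : w K * lamhat n ^ 2 = w n * lamhat K ^ 2 := le_antisymm hfwd hrev
        have h'' := congrArg Real.sqrt h'
        rwa [Real.sqrt_mul hwK.le, Real.sqrt_mul (hw n (by omega) hn2).le,
          Real.sqrt_sq (hpos n (by omega) hn2).le, Real.sqrt_sq hlamK.le] at h''
      · intro ε hε0 hε1 j hj1 hj2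
        rcases eq_or_ne j K with rfl | hjK
        · rw [if_pos le_rfl, if_pos hn2, hA]; linarith
        · have hjK' : j < K := lt_of_le_of_ne hj2 hjK
          rw [if_neg (by omega)]
          by_cases hnj : n ≤ j
          · rw [if_pos hnj]
            have hj' : j ∈ Finset.Icc n (K - 1) := Finset.mem_Icc.mpr ⟨hnj, by omega⟩
            have := Finset.inf'_le (fun j => δ j - ∑ i ∈ Finset.Icc 1 j, lamhat i) hj'
            rw [← hε₀def] at this
            linarith
          · rw [if_neg hnj]; simpa using hle j hj1 hj2
  -- closed form at j₀
  have hform : lamhat K = Real.sqrt (w K) * ((δ K - δ j₀)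
      / ∑ n ∈ Finset.Icc (j₀ + 1) K, Real.sqrt (w n)) := by
    have hsplit := keysplit j₀ K hj₀K.le lamhat
    have hsum : Real.sqrt (w K) * (δ K - δ j₀)
        = (∑ n ∈ Finset.Icc (j₀ + 1) K, Real.sqrt (w n)) * lamhat K := by
      have : Real.sqrt (w K) * ∑ n ∈ Finset.Icc (j₀ + 1) K, lamhat n
          = (∑ n ∈ Finset.Icc (j₀ + 1) K, Real.sqrt (w n)) * lamhat K := by
        rw [Finset.mul_sum, Finset.sum_mul]
        apply Finset.sum_congr rfl
        intro n hn
        rw [Finset.mem_Icc] at hn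
        exact heq n (by omega) hn.2
      have hd : δ K - δ j₀ = ∑ n ∈ Finset.Icc (j₀ + 1) K, lamhat n := by
        rw [← hj₀tight, ← hA]; linarith
      rw [hd, this]
    have hS := hSpos j₀ hj₀K
    rw [← mul_div_assoc, eq_div_iff (ne_of_gt hS)]
    linear_combination -hsum
  -- assemble
  apply le_antisymm
  · rw [hform]
    exact mul_le_mul_of_nonneg_left
      (Finset.le_sup' (f := fun j => (δ K - δ j) / ∑ n ∈ Finset.Icc (j + 1) K, Real.sqrt (w n))
        (Finset.mem_range.mpr hj₀K)) (Real.sqrt_nonneg _)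
  · have hwKs : 0 < Real.sqrt (w K) := Real.sqrt_pos.mpr hwK
    have h2 : (Finset.range K).sup' (Finset.nonempty_range_iff.mpr hK.ne')
        (fun j => (δ K - δ j) / ∑ n ∈ Finset.Icc (j + 1) K, Real.sqrt (w n))
        ≤ lamhat K / Real.sqrt (w K) := by
      apply Finset.sup'_le
      intro j hj
      rw [Finset.mem_range] at hj
      rw [div_le_div_iff₀ (hSpos j hj) hwKs]
      have := hlow j hj
      linarith
    calc Real.sqrt (w K) * _ ≤ Real.sqrt (w K) * (lamhat K / Real.sqrt (w K)) :=
          mul_le_mul_of_nonneg_left h2 hwKs.le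
      _ = lamhat K := by field_simp
end

section
/- Let λ* be the minimizer of ∑_{n=1}^K w_n/λ_n over {0 < λ_n ≤ 1 : ∑_{n=1}^j λ_n ≤ δ_j for all j} (with nondecreasing w_n, δ_j), and let λ̂ be the minimizer of the same problem without the upper bounds λ_n ≤ 1. Then λ*_K = min(1, λ̂_K). -/
open Real Finset

private lemma convkey (w a b t : ℝ) (ha : 0 < a) (hb : 0 < b)
    (ht0 : 0 < t) (ht1 : t < 1) :
    (1-t)*(w/a) + t*(w/b) - w/((1-t)*a + t*b)
      = w*(t*(1-t)*(a-b)^2)/(a*b*((1-t)*a + t*b)) := by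
  have hν : ((1-t)*a + t*b) ≠ 0 := by nlinarith
  have ha' : a ≠ 0 := ne_of_gt ha
  have hb' : b ≠ 0 := ne_of_gt hb
  field_simp
  ring

private lemma conv_le (w a b t : ℝ) (hw : 0 < w) (ha : 0 < a) (hb : 0 < b)
    (ht0 : 0 < t) (ht1 : t < 1) :
    w/((1-t)*a + t*b) ≤ (1-t)*(w/a) + t*(w/b) := by
  have h := convkey w a b t ha hb ht0 ht1
  have hν : 0 < ((1-t)*a + t*b) := by nlinarith
  have h2 : 0 ≤ w*(t*(1-t)*(a-b)^2)/(a*b*((1-t)*a + t*b)) := by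
    apply div_nonneg
    · exact mul_nonneg hw.le (mul_nonneg (mul_nonneg ht0.le (by linarith)) (sq_nonneg _))
    · positivity
  linarith

private lemma conv_lt (w a b t : ℝ) (hw : 0 < w) (ha : 0 < a) (hb : 0 < b)
    (ht0 : 0 < t) (ht1 : t < 1) (hab : a ≠ b) :
    w/((1-t)*a + t*b) < (1-t)*(w/a) + t*(w/b) := by
  have h := convkey w a b t ha hb ht0 ht1
  have hν : 0 < ((1-t)*a + t*b) := by nlinarith
  have hsq : 0 < (a-b)^2 := by
    have : a - b ≠ 0 := sub_ne_zero.mpr hab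
    positivity
  have h2 : 0 < w*(t*(1-t)*(a-b)^2)/(a*b*((1-t)*a + t*b)) := by
    apply div_pos
    · exact mul_pos hw (mul_pos (mul_pos ht0 (by linarith)) hsq)
    · positivity
  linarith

private lemma mono_aux (K : ℕ) (w δ lam : ℕ → ℝ) (u : ℝ)
    (hw : ∀ n, 1 ≤ n → n ≤ K → 0 < w n)
    (hwmono : ∀ n, 1 ≤ n → n + 1 ≤ K → w n ≤ w (n + 1))
    (hpos : ∀ n, 1 ≤ n → n ≤ K → 0 < lam n)
    (hle : ∀ n, 1 ≤ n → n ≤ K → lam n ≤ u)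
    (hpre : ∀ j, 1 ≤ j → j ≤ K → ∑ i ∈ Finset.Icc 1 j, lam i ≤ δ j)
    (hmin : ∀ μ : ℕ → ℝ, (∀ n, 1 ≤ n → n ≤ K → 0 < μ n ∧ μ n ≤ u) →
      (∀ j, 1 ≤ j → j ≤ K → ∑ i ∈ Finset.Icc 1 j, μ i ≤ δ j) →
      ∑ n ∈ Finset.Icc 1 K, w n / lam n ≤ ∑ n ∈ Finset.Icc 1 K, w n / μ n) :
    ∀ n, 1 ≤ n → n + 1 ≤ K → lam n ≤ lam (n + 1) := by
  intro n hn1 hnK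
  by_contra hcon
  push_neg at hcon
  set a := lam n with ha_def
  set b := lam (n+1) with hb_def
  have ha : 0 < a := hpos n hn1 (by omega)
  have hb : 0 < b := hpos (n+1) (by omega) (by omega)
  have hau : a ≤ u := hle n hn1 (by omega)
  have hbu : b ≤ u := hle (n+1) (by omega) (by omega)
  have hne : n ≠ n + 1 := by omega
  set μ : ℕ → ℝ := fun m =>
    lam m + ((if m = n then (b-a)/2 else 0) + (if m = n+1 then (a-b)/2 else 0)) with hμ
  have hμn : μ n = (a+b)/2 := by
    simp only [hμ]
    simp only [if_true, if_neg hne]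
    ring
  have hμn1 : μ (n+1) = (a+b)/2 := by
    simp only [hμ]
    simp only [if_true, if_neg (Ne.symm hne)]
    ring
  have hμother : ∀ m, m ≠ n → m ≠ n + 1 → μ m = lam m := by
    intro m h1 h2
    simp only [hμ]
    rw [if_neg h1, if_neg h2]
    ring
  -- bounds
  have hbounds : ∀ m, 1 ≤ m → m ≤ K → 0 < μ m ∧ μ m ≤ u := by
    intro m h1 h2
    by_cases hm1 : m = n
    · subst hm1; rw [hμn]; constructor <;> [positivity; linarith]
    · by_cases hm2 : m = n + 1
      · subst hm2; rw [hμn1]; constructor <;> [positivity; linarith]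
      · rw [hμother m hm1 hm2]
        exact ⟨hpos m h1 h2, hle m h1 h2⟩
  -- prefix sums
  have hsum : ∀ j : ℕ, ∑ i ∈ Finset.Icc 1 j, μ i = (∑ i ∈ Finset.Icc 1 j, lam i)
      + ((if n ∈ Finset.Icc 1 j then (b-a)/2 else 0)
        + (if n+1 ∈ Finset.Icc 1 j then (a-b)/2 else 0)) := by
    intro j
    rw [hμ]
    rw [Finset.sum_add_distrib, Finset.sum_add_distrib,
      Finset.sum_ite_eq' (Finset.Icc 1 j) n (fun _ => (b-a)/2),
      Finset.sum_ite_eq' (Finset.Icc 1 j) (n+1) (fun _ => (a-b)/2)]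
  have hprefix : ∀ j, 1 ≤ j → j ≤ K → ∑ i ∈ Finset.Icc 1 j, μ i ≤ δ j := by
    intro j h1 h2
    rw [hsum j]
    have hd := hpre j h1 h2
    by_cases hc1 : n + 1 ≤ j
    · rw [if_pos (by simp [Finset.mem_Icc]; omega), if_pos (by simp [Finset.mem_Icc]; omega)]
      linarith
    · by_cases hc2 : n ≤ j
      · rw [if_pos (by simp [Finset.mem_Icc]; omega),
          if_neg (by simp [Finset.mem_Icc]; omega)]
        linarith
      · rw [if_neg (by simp [Finset.mem_Icc]; omega),
          if_neg (by simp [Finset.mem_Icc]; omega)]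
        linarith
  -- objective
  have hnmem : n ∈ Finset.Icc 1 K := by simp [Finset.mem_Icc]; omega
  have hn1mem : n + 1 ∈ Finset.Icc 1 K := by simp [Finset.mem_Icc]; omega
  have hobj : ∑ m ∈ Finset.Icc 1 K, w m / μ m = (∑ m ∈ Finset.Icc 1 K, w m / lam m)
      + ((w n/((a+b)/2) - w n/a) + (w (n+1)/((a+b)/2) - w (n+1)/b)) := by
    have hterm : ∀ m ∈ Finset.Icc 1 K, w m / μ m = w m / lam m
        + ((if m = n then w n/((a+b)/2) - w n/a else 0)
          + (if m = n+1 then w (n+1)/((a+b)/2) - w (n+1)/b else 0)) := by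
      intro m _
      by_cases hm1 : m = n
      · subst hm1
        rw [hμn, if_pos rfl, if_neg hne, ← ha_def]
        ring
      · by_cases hm2 : m = n + 1
        · subst hm2
          rw [hμn1, if_neg hm1, if_pos rfl, ← hb_def]
          ring
        · rw [hμother m hm1 hm2, if_neg hm1, if_neg hm2]
          ring
    rw [Finset.sum_congr rfl hterm, Finset.sum_add_distrib, Finset.sum_add_distrib,
      Finset.sum_ite_eq' (Finset.Icc 1 K) n, Finset.sum_ite_eq' (Finset.Icc 1 K) (n+1),
      if_pos hnmem, if_pos hn1mem]
  have hwn : 0 < w n := hw n hn1 (by omega)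
  have hwm : 0 < w (n+1) := hw (n+1) (by omega) (by omega)
  have hwmn : w n ≤ w (n+1) := hwmono n hn1 hnK
  have hdec : (w n/((a+b)/2) - w n/a) + (w (n+1)/((a+b)/2) - w (n+1)/b) < 0 := by
    have ha' : a ≠ 0 := ne_of_gt ha
    have hb' : b ≠ 0 := ne_of_gt hb
    have hab : a + b ≠ 0 := by positivity
    have hkey : (w n/((a+b)/2) - w n/a) + (w (n+1)/((a+b)/2) - w (n+1)/b)
        = (a-b)*(w n * b - w (n+1) * a)/((a+b)*a*b) := by
      field_simp
      ring
    rw [hkey]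
    apply div_neg_of_neg_of_pos
    · have h1 : 0 < a - b := by linarith
      have h2 : w n * b - w (n+1) * a < 0 := by nlinarith
      nlinarith
    · positivity
  have := hmin μ hbounds hprefix
  rw [hobj] at this
  linarith

private lemma chain_le (K : ℕ) (lam : ℕ → ℝ)
    (h : ∀ n, 1 ≤ n → n + 1 ≤ K → lam n ≤ lam (n + 1)) :
    ∀ n, 1 ≤ n → n ≤ K → lam n ≤ lam K := by
  intro n hn1 hnK
  have key : ∀ m, n ≤ m → m ≤ K → lam n ≤ lam m := by
    intro m
    induction m with
    | zero => intro h1 h2; omega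
    | succ m ih =>
      intro h1 h2
      rcases Nat.eq_or_lt_of_le h1 with he | hl
      · rw [← he]
      · have := ih (by omega) (by omega)
        have := h m (by omega) (by omega)
        linarith
  exact key K hnK le_rfl
private lemma eq_aux (K : ℕ) (w δ lamstar lamhat : ℕ → ℝ) (t : ℝ)
    (hw : ∀ n, 1 ≤ n → n ≤ K → 0 < w n)
    (ht0 : 0 < t) (ht1 : t < 1)
    (hstarfeas : (∀ n, 1 ≤ n → n ≤ K → lamstar n ∈ Set.Ioc (0:ℝ) 1) ∧
      ∀ j, 1 ≤ j → j ≤ K → ∑ i ∈ Finset.Icc 1 j, lamstar i ≤ δ j)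
    (hstarmin : ∀ μ : ℕ → ℝ, (∀ n, 1 ≤ n → n ≤ K → μ n ∈ Set.Ioc (0:ℝ) 1) →
      (∀ j, 1 ≤ j → j ≤ K → ∑ i ∈ Finset.Icc 1 j, μ i ≤ δ j) →
      ∑ n ∈ Finset.Icc 1 K, w n / lamstar n ≤ ∑ n ∈ Finset.Icc 1 K, w n / μ n)
    (hhatfeas : (∀ n, 1 ≤ n → n ≤ K → 0 < lamhat n) ∧
      ∀ j, 1 ≤ j → j ≤ K → ∑ i ∈ Finset.Icc 1 j, lamhat i ≤ δ j)
    (hhatmin : ∀ μ : ℕ → ℝ, (∀ n, 1 ≤ n → n ≤ K → 0 < μ n) →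
      (∀ j, 1 ≤ j → j ≤ K → ∑ i ∈ Finset.Icc 1 j, μ i ≤ δ j) →
      ∑ n ∈ Finset.Icc 1 K, w n / lamhat n ≤ ∑ n ∈ Finset.Icc 1 K, w n / μ n)
    (hub : ∀ n, 1 ≤ n → n ≤ K → (1-t)*lamstar n + t*lamhat n ≤ 1) :
    ∀ m, 1 ≤ m → m ≤ K → lamstar m = lamhat m := by
  intro m hm1 hmK
  by_contra hnem
  set ν : ℕ → ℝ := fun n => (1-t)*lamstar n + t*lamhat n with hν
  have hspos : ∀ n, 1 ≤ n → n ≤ K → 0 < lamstar n := fun n h1 h2 => (hstarfeas.1 n h1 h2).1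
  have hsle : ∀ n, 1 ≤ n → n ≤ K → lamstar n ≤ 1 := fun n h1 h2 => (hstarfeas.1 n h1 h2).2
  have hhpos := hhatfeas.1
  have hνpos : ∀ n, 1 ≤ n → n ≤ K → 0 < ν n := by
    intro n h1 h2
    have := hspos n h1 h2
    have := hhpos n h1 h2
    simp only [hν]
    nlinarith
  have hνmem : ∀ n, 1 ≤ n → n ≤ K → ν n ∈ Set.Ioc (0:ℝ) 1 :=
    fun n h1 h2 => ⟨hνpos n h1 h2, hub n h1 h2⟩
  have hνpre : ∀ j, 1 ≤ j → j ≤ K → ∑ i ∈ Finset.Icc 1 j, ν i ≤ δ j := by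
    intro j h1 h2
    have e : ∑ i ∈ Finset.Icc 1 j, ν i
        = (1-t) * (∑ i ∈ Finset.Icc 1 j, lamstar i) + t * (∑ i ∈ Finset.Icc 1 j, lamhat i) := by
      simp only [hν]
      rw [Finset.sum_add_distrib, ← Finset.mul_sum, ← Finset.mul_sum]
    rw [e]
    have h3 := hstarfeas.2 j h1 h2
    have h4 := hhatfeas.2 j h1 h2
    nlinarith
  have h1 : ∑ n ∈ Finset.Icc 1 K, w n / lamstar n ≤ ∑ n ∈ Finset.Icc 1 K, w n / ν n :=
    hstarmin ν hνmem hνpre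
  have h2 : ∑ n ∈ Finset.Icc 1 K, w n / lamhat n ≤ ∑ n ∈ Finset.Icc 1 K, w n / lamstar n :=
    hhatmin lamstar hspos hstarfeas.2
  have hmm : m ∈ Finset.Icc 1 K := by simp [Finset.mem_Icc]; omega
  have hlt : ∑ n ∈ Finset.Icc 1 K, w n / ν n
      < ∑ n ∈ Finset.Icc 1 K, ((1-t)*(w n / lamstar n) + t*(w n / lamhat n)) := by
    apply Finset.sum_lt_sum
    · intro i hi
      simp only [Finset.mem_Icc] at hi
      exact conv_le (w i) (lamstar i) (lamhat i) t (hw i hi.1 hi.2)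
        (hspos i hi.1 hi.2) (hhpos i hi.1 hi.2) ht0 ht1
    · refine ⟨m, hmm, ?_⟩
      exact conv_lt (w m) (lamstar m) (lamhat m) t (hw m hm1 hmK)
        (hspos m hm1 hmK) (hhpos m hm1 hmK) ht0 ht1 hnem
  have hsplit : ∑ n ∈ Finset.Icc 1 K, ((1-t)*(w n / lamstar n) + t*(w n / lamhat n))
      = (1-t) * (∑ n ∈ Finset.Icc 1 K, w n / lamstar n)
        + t * (∑ n ∈ Finset.Icc 1 K, w n / lamhat n) := by
    rw [Finset.sum_add_distrib, ← Finset.mul_sum, ← Finset.mul_sum]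
  rw [hsplit] at hlt
  nlinarith

theorem stmt_14 (K : ℕ) (hK : 0 < K) (w δ : ℕ → ℝ)
    (hw : ∀ n, 1 ≤ n → n ≤ K → 0 < w n)
    (hwmono : ∀ n, 1 ≤ n → n + 1 ≤ K → w n ≤ w (n + 1))
    (hδmono : ∀ j, j + 1 ≤ K → δ j ≤ δ (j + 1))
    (lamstar lamhat : ℕ → ℝ)
    -- lamstar minimizes over the constrained feasible set (with upper bounds λ_n ≤ 1)
    (hstarfeas : (∀ n, 1 ≤ n → n ≤ K → lamstar n ∈ Set.Ioc (0:ℝ) 1) ∧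
      ∀ j, 1 ≤ j → j ≤ K → ∑ i ∈ Finset.Icc 1 j, lamstar i ≤ δ j)
    (hstarmin : ∀ μ : ℕ → ℝ, (∀ n, 1 ≤ n → n ≤ K → μ n ∈ Set.Ioc (0:ℝ) 1) →
      (∀ j, 1 ≤ j → j ≤ K → ∑ i ∈ Finset.Icc 1 j, μ i ≤ δ j) →
      ∑ n ∈ Finset.Icc 1 K, w n / lamstar n ≤ ∑ n ∈ Finset.Icc 1 K, w n / μ n)
    -- lamhat minimizes the same problem without the upper bounds
    (hhatfeas : (∀ n, 1 ≤ n → n ≤ K → 0 < lamhat n) ∧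
      ∀ j, 1 ≤ j → j ≤ K → ∑ i ∈ Finset.Icc 1 j, lamhat i ≤ δ j)
    (hhatmin : ∀ μ : ℕ → ℝ, (∀ n, 1 ≤ n → n ≤ K → 0 < μ n) →
      (∀ j, 1 ≤ j → j ≤ K → ∑ i ∈ Finset.Icc 1 j, μ i ≤ δ j) →
      ∑ n ∈ Finset.Icc 1 K, w n / lamhat n ≤ ∑ n ∈ Finset.Icc 1 K, w n / μ n) :
    lamstar K = min 1 (lamhat K) := by
  have hspos : ∀ n, 1 ≤ n → n ≤ K → 0 < lamstar n := fun n h1 h2 => (hstarfeas.1 n h1 h2).1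
  have hsle : ∀ n, 1 ≤ n → n ≤ K → lamstar n ≤ 1 := fun n h1 h2 => (hstarfeas.1 n h1 h2).2
  have hhpos := hhatfeas.1
  by_cases hcase : lamstar K = 1
  · -- need lamhat K ≥ 1
    by_cases hhat1 : 1 ≤ lamhat K
    · rw [hcase, min_eq_left hhat1]
    · exfalso
      push_neg at hhat1
      -- lamhat is nondecreasing; set bound u := M
      set M : ℝ := 1 + ∑ i ∈ Finset.Icc 1 K, |lamhat i| with hM
      have hMabs : ∀ n, 1 ≤ n → n ≤ K → lamhat n ≤ M := by
        intro n h1 h2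
        have h3 : |lamhat n| ≤ ∑ i ∈ Finset.Icc 1 K, |lamhat i| :=
          Finset.single_le_sum (f := fun i => |lamhat i|) (fun i _ => abs_nonneg _)
            (by simp [Finset.mem_Icc]; omega)
        have := le_abs_self (lamhat n)
        simp only [hM]; linarith
      have hmono : ∀ n, 1 ≤ n → n + 1 ≤ K → lamhat n ≤ lamhat (n + 1) := by
        apply mono_aux K w δ lamhat M hw hwmono hhpos hMabs hhatfeas.2
        intro μ hb hp
        exact hhatmin μ (fun n h1 h2 => (hb n h1 h2).1) hp
      have hhatK : ∀ n, 1 ≤ n → n ≤ K → lamhat n ≤ lamhat K := chain_le K lamhat hmono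
      have heq := eq_aux K w δ lamstar lamhat (1/2) hw (by norm_num) (by norm_num)
        hstarfeas hstarmin hhatfeas hhatmin ?_ K (by omega) le_rfl
      · rw [hcase] at heq; linarith
      · intro n h1 h2
        have := hsle n h1 h2
        have := hhatK n h1 h2
        nlinarith
  · -- lamstar K < 1
    have hcK : lamstar K < 1 := lt_of_le_of_ne (hsle K (by omega) le_rfl) hcase
    have hmono : ∀ n, 1 ≤ n → n + 1 ≤ K → lamstar n ≤ lamstar (n + 1) := by
      apply mono_aux K w δ lamstar 1 hw hwmono hspos hsle hstarfeas.2
      intro μ hb hp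
      exact hstarmin μ (fun n h1 h2 => ⟨(hb n h1 h2).1, (hb n h1 h2).2⟩) hp
    have hstarK : ∀ n, 1 ≤ n → n ≤ K → lamstar n ≤ lamstar K := chain_le K lamstar hmono
    set c : ℝ := lamstar K with hc
    have hc0 : 0 < c := hspos K (by omega) le_rfl
    set M : ℝ := 1 + ∑ i ∈ Finset.Icc 1 K, |lamhat i| with hM
    have hM1 : 1 ≤ M := by
      have : 0 ≤ ∑ i ∈ Finset.Icc 1 K, |lamhat i| :=
        Finset.sum_nonneg (fun i _ => abs_nonneg _)
      simp only [hM]; linarith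
    have hMabs : ∀ n, 1 ≤ n → n ≤ K → lamhat n ≤ M := by
      intro n h1 h2
      have h3 : |lamhat n| ≤ ∑ i ∈ Finset.Icc 1 K, |lamhat i| :=
        Finset.single_le_sum (f := fun i => |lamhat i|) (fun i _ => abs_nonneg _)
          (by simp [Finset.mem_Icc]; omega)
      have := le_abs_self (lamhat n)
      simp only [hM]; linarith
    set t : ℝ := (1 - c)/M with ht
    have ht0 : 0 < t := by
      apply div_pos (by linarith) (by linarith)
    have ht1 : t < 1 := by
      rw [ht, div_lt_one (by linarith)]
      linarith
    have htM : t * M = 1 - c := by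
      rw [ht]
      field_simp
    have heq := eq_aux K w δ lamstar lamhat t hw ht0 ht1
      hstarfeas hstarmin hhatfeas hhatmin ?_ K (by omega) le_rfl
    · have hhatlt : lamhat K < 1 := by rw [← heq]; exact hcK
      rw [min_eq_right (le_of_lt hhatlt)]
      exact heq
    · intro n h1 h2
      have hs1 : lamstar n ≤ c := hstarK n h1 h2
      have hs0 : 0 < lamstar n := hspos n h1 h2
      have hh1 : lamhat n ≤ M := hMabs n h1 h2
      have h4 : t * lamhat n ≤ t * M := mul_le_mul_of_nonneg_left hh1 ht0.le
      nlinarith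
end

section
/- For c > 0, the function Q(θ) = c(2(e^{-θ} - 1) + 2√(1 - e^θ)e^{-θ}) (i.e., γ = 2) is convex on (-∞, ln(2(√2-1))] and concave on (ln(2(√2-1)), 0]. -/
/-!
For θ < 0 put s = √(1 - e^θ) ∈ (0, 1); then Q'(θ) = -c (1/s + 2/(1 - s)), and s decreases
in θ. So Q is convex (concave) where h(s) = 1/s + 2/(1 - s) increases (decreases) in s.
Now h(b) - h(a) has the sign of (b - a)(2ab - (1 - a)(1 - b)), and √2 a ≥ 1 - a exactly when
a ≥ √2 - 1; hence h decreases on (0, √2 - 1] and increases on [√2 - 1, 1). Finally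
s = √2 - 1 exactly when e^θ = 2(√2 - 1).
-/

open Real Set

theorem sqrt_two_sub_one_pos : 0 < √2 - 1 := by
  rw [sub_pos, lt_sqrt zero_le_one]; norm_num

theorem sqrt_two_sub_one_lt_one : √2 - 1 < 1 := by
  rw [sub_lt_iff_lt_add, sqrt_lt' (by norm_num)]; norm_num

theorem one_sub_le_sqrt_two_mul_iff {a : ℝ} : 1 - a ≤ √2 * a ↔ √2 - 1 ≤ a := by
  have h2 := sq_sqrt (zero_le_two : (0 : ℝ) ≤ 2)
  have := sqrt_two_sub_one_pos
  constructor <;> intro h <;> nlinarith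

theorem sqrt_two_mul_le_one_sub_iff {a : ℝ} : √2 * a ≤ 1 - a ↔ a ≤ √2 - 1 := by
  have h2 := sq_sqrt (zero_le_two : (0 : ℝ) ≤ 2)
  have := sqrt_two_sub_one_pos
  constructor <;> intro h <;> nlinarith

theorem log_two_mul_sqrt_two_sub_one_neg : log (2 * (√2 - 1)) < 0 := by
  have h2 := sq_sqrt (zero_le_two : (0 : ℝ) ≤ 2)
  have := sqrt_two_sub_one_pos
  exact log_neg (by positivity) (by nlinarith)

theorem inv_add_two_div_one_sub_sub {a b : ℝ} (ha : 0 < a) (hb : 0 < b) (ha1 : a < 1)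
    (hb1 : b < 1) :
    (b⁻¹ + 2 / (1 - b)) - (a⁻¹ + 2 / (1 - a)) =
      (b - a) * (2 * a * b - (1 - a) * (1 - b)) / (a * b * ((1 - a) * (1 - b))) := by
  have : 1 - a ≠ 0 := by linarith
  have : 1 - b ≠ 0 := by linarith
  field_simp
  ring

theorem monotoneOn_inv_add_two_div_one_sub :
    MonotoneOn (fun s : ℝ => s⁻¹ + 2 / (1 - s)) (Ico (√2 - 1) 1) := by
  rintro a ⟨ha, ha1⟩ b ⟨hb, hb1⟩ hab
  have ha0 : 0 < a := sqrt_two_sub_one_pos.trans_le ha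
  have hb0 : 0 < b := sqrt_two_sub_one_pos.trans_le hb
  have key : (1 - a) * (1 - b) ≤ 2 * a * b := by
    have := mul_le_mul (one_sub_le_sqrt_two_mul_iff.mpr ha) (one_sub_le_sqrt_two_mul_iff.mpr hb)
      (by linarith) (by positivity)
    nlinarith [sq_sqrt (zero_le_two : (0 : ℝ) ≤ 2)]
  rw [← sub_nonneg, inv_add_two_div_one_sub_sub ha0 hb0 ha1 hb1]
  have : 0 < 1 - a := by linarith
  have : 0 < 1 - b := by linarith
  exact div_nonneg (mul_nonneg (by linarith) (by linarith)) (by positivity)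

theorem antitoneOn_inv_add_two_div_one_sub :
    AntitoneOn (fun s : ℝ => s⁻¹ + 2 / (1 - s)) (Ioc 0 (√2 - 1)) := by
  rintro a ⟨ha0, ha⟩ b ⟨hb0, hb⟩ hab
  have ha1 : a < 1 := ha.trans_lt sqrt_two_sub_one_lt_one
  have hb1 : b < 1 := hb.trans_lt sqrt_two_sub_one_lt_one
  have key : 2 * b * a ≤ (1 - b) * (1 - a) := by
    have := mul_le_mul (sqrt_two_mul_le_one_sub_iff.mpr hb) (sqrt_two_mul_le_one_sub_iff.mpr ha)
      (by positivity) (by linarith)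
    nlinarith [sq_sqrt (zero_le_two : (0 : ℝ) ≤ 2)]
  rw [← sub_nonneg, inv_add_two_div_one_sub_sub hb0 ha0 hb1 ha1]
  have : 0 < 1 - a := by linarith
  have : 0 < 1 - b := by linarith
  exact div_nonneg (mul_nonneg_of_nonpos_of_nonpos (by linarith) (by linarith)) (by positivity)

noncomputable def dfeCost (c θ : ℝ) : ℝ :=
  c * (2 * (exp (-θ) - 1) + 2 * √(1 - exp θ) * exp (-θ))

theorem hasDerivAt_sqrt_one_sub_exp {θ : ℝ} (hθ : θ < 0) :
    HasDerivAt (fun t => √(1 - exp t)) (-exp θ / (2 * √(1 - exp θ))) θ := by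
  have h : 1 - exp θ ≠ 0 := by linarith [exp_lt_one_iff.mpr hθ]
  simpa using ((hasDerivAt_exp θ).const_sub 1).sqrt h

theorem hasDerivAt_dfeCost (c : ℝ) {θ : ℝ} (hθ : θ < 0) :
    HasDerivAt (dfeCost c) (-c * ((√(1 - exp θ))⁻¹ + 2 / (1 - √(1 - exp θ)))) θ := by
  have hexp_neg : HasDerivAt (fun t => exp (-t)) (-exp (-θ)) θ := by
    simpa using (hasDerivAt_neg θ).exp
  refine ((((hexp_neg.sub_const 1).const_mul 2).add
    (((hasDerivAt_sqrt_one_sub_exp hθ).const_mul 2).mul hexp_neg)).const_mul c).congr_deriv ?_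
  have hu : 0 < 1 - exp θ := by linarith [exp_lt_one_iff.mpr hθ]
  set s := √(1 - exp θ)
  have hs : 0 < s := sqrt_pos.mpr hu
  have he : exp θ = 1 - s ^ 2 := by rw [sq_sqrt hu.le]; ring
  have hs1 : 1 - s ≠ 0 := by nlinarith [exp_pos θ]
  have hs2 : 1 - s ^ 2 ≠ 0 := by rw [← he]; exact (exp_pos θ).ne'
  rw [exp_neg, he]
  field_simp
  ring

theorem sqrt_one_sub_exp_lt_one (θ : ℝ) : √(1 - exp θ) < 1 :=
  (sqrt_lt' one_pos).mpr (by linarith [exp_pos θ])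

theorem sqrt_two_sub_one_lt_sqrt_one_sub_exp_iff {θ : ℝ} :
    √2 - 1 < √(1 - exp θ) ↔ θ < log (2 * (√2 - 1)) := by
  have h2 := sq_sqrt (zero_le_two : (0 : ℝ) ≤ 2)
  rw [lt_sqrt sqrt_two_sub_one_pos.le, lt_log_iff_exp_lt (by linarith [sqrt_two_sub_one_pos])]
  constructor <;> intro h <;> nlinarith

theorem continuous_dfeCost (c : ℝ) : Continuous (dfeCost c) := by
  unfold dfeCost; fun_prop

theorem monotoneOn_deriv_dfeCost {c : ℝ} (hc : 0 ≤ c) :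
    MonotoneOn (deriv (dfeCost c)) (Iio (log (2 * (√2 - 1)))) := by
  intro a ha b hb hab
  have hL := log_two_mul_sqrt_two_sub_one_neg
  rw [(hasDerivAt_dfeCost c (lt_trans ha hL)).deriv, (hasDerivAt_dfeCost c (lt_trans hb hL)).deriv]
  refine mul_le_mul_of_nonpos_left ?_ (neg_nonpos.mpr hc)
  exact monotoneOn_inv_add_two_div_one_sub
    ⟨(sqrt_two_sub_one_lt_sqrt_one_sub_exp_iff.mpr hb).le, sqrt_one_sub_exp_lt_one b⟩
    ⟨(sqrt_two_sub_one_lt_sqrt_one_sub_exp_iff.mpr ha).le, sqrt_one_sub_exp_lt_one a⟩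
    (sqrt_le_sqrt (by gcongr))

theorem antitoneOn_deriv_dfeCost {c : ℝ} (hc : 0 ≤ c) :
    AntitoneOn (deriv (dfeCost c)) (Ioo (log (2 * (√2 - 1))) 0) := by
  have mem {θ : ℝ} (hθ : θ ∈ Ioo (log (2 * (√2 - 1))) 0) :
      √(1 - exp θ) ∈ Ioc 0 (√2 - 1) :=
    ⟨sqrt_pos.mpr (sub_pos.mpr (exp_lt_one_iff.mpr hθ.2)),
      le_of_not_gt (sqrt_two_sub_one_lt_sqrt_one_sub_exp_iff.not.mpr hθ.1.not_gt)⟩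
  intro a ha b hb hab
  rw [(hasDerivAt_dfeCost c ha.2).deriv, (hasDerivAt_dfeCost c hb.2).deriv]
  refine mul_le_mul_of_nonpos_left ?_ (neg_nonpos.mpr hc)
  exact antitoneOn_inv_add_two_div_one_sub (mem hb) (mem ha) (sqrt_le_sqrt (by gcongr))

theorem stmt_17 (c : ℝ) (hc : 0 < c) :
    let Q : ℝ → ℝ := fun θ =>
      c * (2 * (Real.exp (-θ) - 1) + 2 * Real.sqrt (1 - Real.exp θ) * Real.exp (-θ))
    ConvexOn ℝ (Set.Iic (Real.log (2 * (Real.sqrt 2 - 1)))) Q ∧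
      ConcaveOn ℝ (Set.Ioc (Real.log (2 * (Real.sqrt 2 - 1))) 0) Q := by
  have hdiff : DifferentiableOn ℝ (dfeCost c) (Iio 0) := fun θ hθ =>
    (hasDerivAt_dfeCost c hθ).differentiableAt.differentiableWithinAt
  show ConvexOn ℝ _ (dfeCost c) ∧ ConcaveOn ℝ _ (dfeCost c)
  constructor
  · refine MonotoneOn.convexOn_of_deriv (convex_Iic _) (continuous_dfeCost c).continuousOn
      ?_ ?_ <;> rw [interior_Iic]
    · exact hdiff.mono fun θ hθ => lt_trans hθ log_two_mul_sqrt_two_sub_one_neg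
    · exact monotoneOn_deriv_dfeCost hc.le
  · refine AntitoneOn.concaveOn_of_deriv (convex_Ioc _ _) (continuous_dfeCost c).continuousOn
      ?_ ?_ <;> rw [interior_Ioc]
    · exact hdiff.mono Ioo_subset_Iio_self
    · exact antitoneOn_deriv_dfeCost hc.le
end

section
/- Let w_1,...,w_K > 0 and δ_0 = 0, δ_1,...,δ_K ∈ ℝ. The largest coordinate θ̂_K of the minimizer of ∑_{n=1}^K w_n e^{-θ_n} over {θ ∈ ℝ^K : ∑_{n=1}^j θ_n ≤ δ_j for all j = 1,...,K} equals ln w_K + max_{ℓ=0,...,K-1} (δ_K - δ_ℓ - ∑_{j=ℓ+1}^K ln w_j)/(K - ℓ). -/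
open Real Finset

private lemma sum_update_gen (s : Finset ℕ) (F : ℕ → ℝ → ℝ) (f : ℕ → ℝ) (i : ℕ) (b : ℝ)
    (hi : i ∈ s) :
    ∑ n ∈ s, F n (Function.update f i b n) = (∑ n ∈ s, F n (f n)) + (F i b - F i (f i)) := by
  rw [Finset.sum_eq_add_sum_sdiff_singleton_of_mem hi (fun n => F n (Function.update f i b n)),
      Finset.sum_eq_add_sum_sdiff_singleton_of_mem hi (fun n => F n (f n))]
  simp only [Function.update_self]
  have h : ∑ n ∈ s \ {i}, F n (Function.update f i b n) = ∑ n ∈ s \ {i}, F n (f n) := by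
    refine Finset.sum_congr rfl fun n hn => ?_
    rw [Function.update_of_ne (by simpa using (Finset.mem_sdiff.mp hn).2)]
  rw [h]; ring

private lemma sum_update_gen_not (s : Finset ℕ) (F : ℕ → ℝ → ℝ) (f : ℕ → ℝ) (i : ℕ) (b : ℝ)
    (hi : i ∉ s) :
    ∑ n ∈ s, F n (Function.update f i b n) = ∑ n ∈ s, F n (f n) := by
  refine Finset.sum_congr rfl fun n hn => ?_
  rw [Function.update_of_ne (by rintro rfl; exact hi hn)]

private lemma aux_le (a b s : ℝ) (hs : 0 < s)
    (h : ∀ ε : ℝ, 0 < ε → ε ≤ s → a ≤ b * Real.exp ε) : a ≤ b := by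
  have ht : Filter.Tendsto (fun ε : ℝ => b * Real.exp ε) (nhdsWithin 0 (Set.Ioi 0))
      (nhds b) := by
    have hc : Continuous (fun ε : ℝ => b * Real.exp ε) := by continuity
    have := (hc.tendsto 0).mono_left (nhdsWithin_le_nhds (s := Set.Ioi (0:ℝ)))
    simpa using this
  refine ge_of_tendsto ht ?_
  filter_upwards [Ioc_mem_nhdsGT_of_mem (Set.left_mem_Ico.mpr hs)] with ε hε
  exact h ε hε.1 hε.2

private lemma aux_alg (A b x y : ℝ) (hx : x < 1) (hxy : x * y = 1)
    (h : 0 ≤ b * (x - 1) + A * (y - 1)) : b ≤ A * y := by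
  have h6 : A * y * (1 - x) = A * (y - 1) := by
    have h7 : A * y * (1 - x) = A * y - A * (x * y) := by ring
    rw [h7, hxy, mul_one]; ring
  have h8 : b * (1 - x) ≤ A * y * (1 - x) := by rw [h6]; linarith
  exact le_of_mul_le_mul_right h8 (by linarith)

theorem stmt_19 (K : ℕ) (hK : 0 < K) (w δ : ℕ → ℝ)
    (hw : ∀ n, 1 ≤ n → n ≤ K → 0 < w n)
    (hwmono : ∀ n, 1 ≤ n → n + 1 ≤ K → w n ≤ w (n + 1))
    (hδ0 : δ 0 = 0)
    (θhat : ℕ → ℝ)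
    (hfeas : ∀ j, 1 ≤ j → j ≤ K → ∑ i ∈ Finset.Icc 1 j, θhat i ≤ δ j)
    (hmin : ∀ θ : ℕ → ℝ,
      (∀ j, 1 ≤ j → j ≤ K → ∑ i ∈ Finset.Icc 1 j, θ i ≤ δ j) →
      ∑ n ∈ Finset.Icc 1 K, w n * Real.exp (-(θhat n)) ≤
        ∑ n ∈ Finset.Icc 1 K, w n * Real.exp (-(θ n))) :
    θhat K = Real.log (w K) +
      (Finset.range K).sup' (Finset.nonempty_range_iff.mpr hK.ne')
        (fun l => (δ K - δ l - ∑ j ∈ Finset.Icc (l + 1) K, Real.log (w j)) / (K - l)) := by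
  classical
  set P : ℕ → ℝ := fun j => ∑ i ∈ Finset.Icc 1 j, θhat i with hPdef
  have hP0 : P 0 = 0 := by simp [hPdef]
  have hfeas' : ∀ l, l ≤ K → P l ≤ δ l := by
    intro l hl
    rcases Nat.eq_zero_or_pos l with rfl | hlpos
    · rw [hP0, hδ0]
    · exact hfeas l hlpos hl
  -- objective function shorthand
  set a : ℕ → ℝ := fun n => w n * Real.exp (-(θhat n)) with hadef
  have hapos : ∀ n, 1 ≤ n → n ≤ K → 0 < a n := fun n h1 h2 =>
    mul_pos (hw n h1 h2) (Real.exp_pos _)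
  -- Step A : last constraint tight
  have hA : P K = δ K := by
    by_contra hne
    have hlt : P K < δ K := lt_of_le_of_ne (hfeas' K le_rfl) hne
    set s := δ K - P K with hsdef
    have hs : 0 < s := by simp [hsdef]; linarith
    set θ' := Function.update θhat K (θhat K + s) with hθ'def
    have hfeasθ' : ∀ j, 1 ≤ j → j ≤ K → ∑ i ∈ Finset.Icc 1 j, θ' i ≤ δ j := by
      intro j hj1 hjK
      rcases eq_or_lt_of_le hjK with rfl | hjlt
      · rw [hθ'def, sum_update_gen _ (fun _ x => x) _ _ _ (Finset.mem_Icc.mpr ⟨hj1, le_rfl⟩)]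
        have : (∑ n ∈ Finset.Icc 1 j, θhat n) = P j := rfl
        rw [this]; linarith
      · rw [hθ'def, sum_update_gen_not _ (fun _ x => x) _ _ _
          (by simp [Finset.mem_Icc]; omega)]
        exact hfeas j hj1 hjK
    have hm := hmin θ' hfeasθ'
    rw [hθ'def, sum_update_gen _ (fun n x => w n * Real.exp (-x)) _ _ _
      (Finset.mem_Icc.mpr ⟨hK, le_rfl⟩)] at hm
    have hlt2 : w K * Real.exp (-(θhat K + s)) < w K * Real.exp (-(θhat K)) := by
      have := hw K hK le_rfl
      have h2 : Real.exp (-(θhat K + s)) < Real.exp (-(θhat K)) :=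
        Real.exp_lt_exp.mpr (by linarith)
      nlinarith
    linarith
  -- Step B : adjacent exchange (always feasible direction)
  have hB : ∀ i, 1 ≤ i → i + 1 ≤ K → a (i + 1) ≤ a i := by
    intro i h1 h2
    refine aux_le _ _ 1 one_pos fun ε hε _ => ?_
    set g := Function.update θhat i (θhat i - ε) with hgdef
    set θ' := Function.update g (i + 1) (θhat (i + 1) + ε) with hθ'def
    have hgi1 : g (i + 1) = θhat (i + 1) := by
      rw [hgdef, Function.update_of_ne (by omega)]
    have hfeasθ' : ∀ j, 1 ≤ j → j ≤ K → ∑ n ∈ Finset.Icc 1 j, θ' n ≤ δ j := by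
      intro j hj1 hjK
      rcases lt_or_ge j (i + 1) with hj | hj
      · -- j ≤ i : i+1 not in the range
        rw [hθ'def, sum_update_gen_not _ (fun _ x => x) _ _ _
          (by simp [Finset.mem_Icc]; omega)]
        rcases lt_or_ge j i with hji | hji
        · rw [hgdef, sum_update_gen_not _ (fun _ x => x) _ _ _
            (by simp [Finset.mem_Icc]; omega)]
          exact hfeas j hj1 hjK
        · have hji' : j = i := by omega
          subst hji'
          rw [hgdef, sum_update_gen _ (fun _ x => x) _ _ _
            (Finset.mem_Icc.mpr ⟨h1, le_rfl⟩)]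
          have := hfeas j hj1 hjK
          linarith
      · -- both i and i+1 in the range
        rw [hθ'def, sum_update_gen _ (fun _ x => x) _ _ _
          (Finset.mem_Icc.mpr ⟨by omega, hj⟩), hgi1,
          hgdef, sum_update_gen _ (fun _ x => x) _ _ _
          (Finset.mem_Icc.mpr ⟨h1, by omega⟩)]
        have := hfeas j hj1 hjK
        linarith
    have hm := hmin θ' hfeasθ'
    rw [hθ'def, sum_update_gen _ (fun n x => w n * Real.exp (-x)) _ _ _
      (Finset.mem_Icc.mpr ⟨by omega, h2⟩), hgi1,
      hgdef, sum_update_gen _ (fun n x => w n * Real.exp (-x)) _ _ _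
      (Finset.mem_Icc.mpr ⟨h1, by omega⟩)] at hm
    have he1 : Real.exp (-(θhat (i + 1) + ε)) = Real.exp (-(θhat (i + 1))) * Real.exp (-ε) := by
      rw [← Real.exp_add]; ring_nf
    have he2 : Real.exp (-(θhat i - ε)) = Real.exp (-(θhat i)) * Real.exp ε := by
      rw [← Real.exp_add]; ring_nf
    rw [he1, he2] at hm
    -- hm : obj ≤ obj + (b * e^{-ε} - b) + (a * e^{ε} - a)
    have hx : Real.exp (-ε) < 1 := by
      rw [← Real.exp_zero]; exact Real.exp_lt_exp.mpr (by linarith)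
    have hxy : Real.exp (-ε) * Real.exp ε = 1 := by
      rw [← Real.exp_add]; simp
    simp only [hadef]
    exact aux_alg _ _ _ _ hx hxy (by linarith)
  -- Step C : reverse exchange when constraint i is slack
  have hC : ∀ i, 1 ≤ i → i + 1 ≤ K → P i < δ i → a i ≤ a (i + 1) := by
    intro i h1 h2 hslack
    refine aux_le _ _ (δ i - P i) (by linarith) fun ε hε hεs => ?_
    set g := Function.update θhat i (θhat i + ε) with hgdef
    set θ' := Function.update g (i + 1) (θhat (i + 1) - ε) with hθ'def
    have hgi1 : g (i + 1) = θhat (i + 1) := by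
      rw [hgdef, Function.update_of_ne (by omega)]
    have hfeasθ' : ∀ j, 1 ≤ j → j ≤ K → ∑ n ∈ Finset.Icc 1 j, θ' n ≤ δ j := by
      intro j hj1 hjK
      rcases lt_or_ge j (i + 1) with hj | hj
      · rw [hθ'def, sum_update_gen_not _ (fun _ x => x) _ _ _
          (by simp [Finset.mem_Icc]; omega)]
        rcases lt_or_ge j i with hji | hji
        · rw [hgdef, sum_update_gen_not _ (fun _ x => x) _ _ _
            (by simp [Finset.mem_Icc]; omega)]
          exact hfeas j hj1 hjK
        · have hji' : j = i := by omega
          subst hji'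
          rw [hgdef, sum_update_gen _ (fun _ x => x) _ _ _
            (Finset.mem_Icc.mpr ⟨h1, le_rfl⟩)]
          have : (∑ n ∈ Finset.Icc 1 j, θhat n) = P j := rfl
          rw [this]
          linarith
      · rw [hθ'def, sum_update_gen _ (fun _ x => x) _ _ _
          (Finset.mem_Icc.mpr ⟨by omega, hj⟩), hgi1,
          hgdef, sum_update_gen _ (fun _ x => x) _ _ _
          (Finset.mem_Icc.mpr ⟨h1, by omega⟩)]
        have := hfeas j hj1 hjK
        linarith
    have hm := hmin θ' hfeasθ'
    rw [hθ'def, sum_update_gen _ (fun n x => w n * Real.exp (-x)) _ _ _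
      (Finset.mem_Icc.mpr ⟨by omega, h2⟩), hgi1,
      hgdef, sum_update_gen _ (fun n x => w n * Real.exp (-x)) _ _ _
      (Finset.mem_Icc.mpr ⟨h1, by omega⟩)] at hm
    have he1 : Real.exp (-(θhat (i + 1) - ε)) = Real.exp (-(θhat (i + 1))) * Real.exp ε := by
      rw [← Real.exp_add]; ring_nf
    have he2 : Real.exp (-(θhat i + ε)) = Real.exp (-(θhat i)) * Real.exp (-ε) := by
      rw [← Real.exp_add]; ring_nf
    rw [he1, he2] at hm
    have hx : Real.exp (-ε) < 1 := by
      rw [← Real.exp_zero]; exact Real.exp_lt_exp.mpr (by linarith)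
    have hxy : Real.exp (-ε) * Real.exp ε = 1 := by
      rw [← Real.exp_add]; simp
    simp only [hadef]
    exact aux_alg _ _ _ _ hx hxy (by linarith)
  -- chain : a is antitone on [1, K]
  have hchain : ∀ d i, 1 ≤ i → i + d ≤ K → a (i + d) ≤ a i := by
    intro d
    induction d with
    | zero => intro i _ _; exact le_rfl
    | succ d ih =>
      intro i h1 h2
      have := hB (i + d) (by omega) (by omega)
      have h3 := ih i h1 (by omega)
      calc a (i + (d + 1)) = a (i + d + 1) := by ring_nf
        _ ≤ a (i + d) := this
        _ ≤ a i := h3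
  have hchain' : ∀ i j, 1 ≤ i → i ≤ j → j ≤ K → a j ≤ a i := by
    intro i j h1 hij hjK
    have := hchain (j - i) i h1 (by omega)
    rwa [show i + (j - i) = j by omega] at this
  -- the tight set and its maximum below K
  set T := (Finset.range K).filter (fun l => P l = δ l) with hTdef
  have h0T : 0 ∈ T := by
    rw [hTdef, Finset.mem_filter]
    exact ⟨Finset.mem_range.mpr hK, by rw [hP0, hδ0]⟩
  have hTne : T.Nonempty := ⟨0, h0T⟩
  set L := T.max' hTne with hLdef
  have hLmem : L ∈ T := T.max'_mem hTne
  have hLK : L < K := Finset.mem_range.mp (Finset.mem_filter.mp hLmem).1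
  have hLtight : P L = δ L := (Finset.mem_filter.mp hLmem).2
  -- slack strictly above L (below K)
  have hslack : ∀ i, L < i → i < K → P i < δ i := by
    intro i hLi hiK
    rcases lt_or_ge (P i) (δ i) with h | h
    · exact h
    · exfalso
      have heq : P i = δ i := le_antisymm (hfeas' i (le_of_lt hiK)) h
      have : i ∈ T := Finset.mem_filter.mpr ⟨Finset.mem_range.mpr hiK, heq⟩
      have := T.le_max' i this
      omega
  -- a constant on [L+1, K]
  have hstep : ∀ i, L + 1 ≤ i → i + 1 ≤ K → a i = a (i + 1) := by
    intro i hLi hiK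
    exact le_antisymm (hC i (by omega) hiK (hslack i (by omega) (by omega)))
      (hB i (by omega) hiK)
  have hconstd : ∀ d, d ≤ K - (L + 1) → a (K - d) = a K := by
    intro d
    induction d with
    | zero => intro _; rfl
    | succ d ih =>
      intro hd
      have h1 : a (K - (d + 1)) = a (K - (d + 1) + 1) :=
        hstep (K - (d + 1)) (by omega) (by omega)
      rw [h1, show K - (d + 1) + 1 = K - d by omega]
      exact ih (by omega)
  have hconst : ∀ i, L + 1 ≤ i → i ≤ K → a i = a K := by
    intro i h1 h2
    have := hconstd (K - i) (by omega)
    rwa [show K - (K - i) = i by omega] at this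
  -- c = θhat K - log (w K)
  set c := θhat K - Real.log (w K) with hcdef
  have hwKpos : 0 < w K := hw K hK le_rfl
  -- θhat i in terms of a i
  have hθeq : ∀ i, 1 ≤ i → i ≤ K → a i = a K → θhat i = Real.log (w i) + c := by
    intro i h1 h2 hai
    have hwi : 0 < w i := hw i h1 h2
    have h3 : Real.log (a i) = Real.log (a K) := by rw [hai]
    simp only [hadef] at h3
    rw [Real.log_mul (ne_of_gt hwi) (Real.exp_ne_zero _), Real.log_exp,
      Real.log_mul (ne_of_gt hwKpos) (Real.exp_ne_zero _), Real.log_exp] at h3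
    rw [hcdef]; linarith
  have hθle : ∀ i, 1 ≤ i → i ≤ K → θhat i ≤ Real.log (w i) + c := by
    intro i h1 h2
    have hwi : 0 < w i := hw i h1 h2
    have hai : a K ≤ a i := hchain' i K h1 h2 le_rfl
    have h3 : Real.log (a K) ≤ Real.log (a i) :=
      Real.log_le_log (hapos K hK le_rfl) hai
    simp only [hadef] at h3
    rw [Real.log_mul (ne_of_gt hwi) (Real.exp_ne_zero _), Real.log_exp,
      Real.log_mul (ne_of_gt hwKpos) (Real.exp_ne_zero _), Real.log_exp] at h3
    rw [hcdef]; linarith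
  -- splitting sums: Icc 1 j = Ioc 0 j
  have hIcc : ∀ m j : ℕ, Finset.Icc (m + 1) j = Finset.Ioc m j := fun m j =>
    by rw [← Finset.Icc_add_one_left_eq_Ioc]
  have hsplit : ∀ l, l ≤ K → ∑ i ∈ Finset.Ioc l K, θhat i = P K - P l := by
    intro l hl
    have := Finset.sum_Ioc_consecutive θhat (Nat.zero_le l) hl
    rw [hPdef]
    simp only [hIcc 0]
    linarith
  -- the sup' value
  have hcard : ∀ l, l < K → (Finset.Ioc l K).card = K - l := fun l hl => Nat.card_Ioc l K
  -- upper bound: every term ≤ c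
  have hub : ∀ l ∈ Finset.range K,
      (δ K - δ l - ∑ j ∈ Finset.Icc (l + 1) K, Real.log (w j)) / (K - l) ≤ c := by
    intro l hl
    have hlK : l < K := Finset.mem_range.mp hl
    have hKl : (0:ℝ) < (K:ℝ) - l := by
      have : (l:ℝ) < K := by exact_mod_cast hlK
      linarith
    rw [div_le_iff₀ hKl]
    have h1 : ∑ i ∈ Finset.Ioc l K, θhat i ≤
        ∑ i ∈ Finset.Ioc l K, (Real.log (w i) + c) := by
      refine Finset.sum_le_sum fun i hi => ?_
      have hi' := Finset.mem_Ioc.mp hi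
      exact hθle i (by omega) hi'.2
    rw [Finset.sum_add_distrib, Finset.sum_const, hcard l hlK, nsmul_eq_mul] at h1
    have h2 := hsplit l (le_of_lt hlK)
    have h3 := hfeas' l (le_of_lt hlK)
    have hcast : ((K - l : ℕ) : ℝ) = (K:ℝ) - l := by
      rw [Nat.cast_sub (le_of_lt hlK)]
    rw [hcast] at h1
    rw [hIcc l K]
    have hA' : P K = δ K := hA
    nlinarith [h1, h2, h3, hA']
  -- the term at L equals c
  have heqL : (δ K - δ L - ∑ j ∈ Finset.Icc (L + 1) K, Real.log (w j)) / ((K:ℝ) - L) = c := by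
    have hKl : (0:ℝ) < (K:ℝ) - L := by
      have : (L:ℝ) < K := by exact_mod_cast hLK
      linarith
    rw [div_eq_iff (ne_of_gt hKl)]
    have h1 : ∑ i ∈ Finset.Ioc L K, θhat i =
        ∑ i ∈ Finset.Ioc L K, (Real.log (w i) + c) := by
      refine Finset.sum_congr rfl fun i hi => ?_
      have hi' := Finset.mem_Ioc.mp hi
      exact hθeq i (by omega) hi'.2 (hconst i (by omega) hi'.2)
    rw [Finset.sum_add_distrib, Finset.sum_const, hcard L hLK, nsmul_eq_mul] at h1
    have hcast : ((K - L : ℕ) : ℝ) = (K:ℝ) - L := by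
      rw [Nat.cast_sub (le_of_lt hLK)]
    rw [hcast] at h1
    have h2 := hsplit L (le_of_lt hLK)
    rw [hIcc L K]
    nlinarith [h1, h2, hLtight, hA]
  -- conclude
  have hsup : (Finset.range K).sup' (Finset.nonempty_range_iff.mpr hK.ne')
      (fun l => (δ K - δ l - ∑ j ∈ Finset.Icc (l + 1) K, Real.log (w j)) / (K - l)) = c := by
    apply le_antisymm
    · exact Finset.sup'_le _ _ hub
    · refine le_trans (le_of_eq heqL.symm) ?_
      exact Finset.le_sup'
        (fun l => (δ K - δ l - ∑ j ∈ Finset.Icc (l + 1) K, Real.log (w j)) / ((K:ℝ) - l))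
        (Finset.mem_range.mpr hLK)
  rw [hsup, hcdef]; ring
end
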